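/- arXiv:2307.08021 — 2 statements merged into one kernel-verified Lean document; each statement's English description precedes it below -/
import Mathlib

section
/- For every subset Z ⊆ X_1 and every f ∈ C(X_1,ℝ), the average a-weighted topological pressure satisfies P_W^a(T_1,Z,f) = sup_{{U_i}} P_W^a(T_1,Z,{U_i},f) = lim_{max_{1≤i≤k} diam U_i → 0} P_W^a(T_1,Z,{U_i},f), where the supremum and limit are taken over all tuples of open covers U_i of X_i, i=1,…,k; moreover all these quantities equal the a-weighted topological pressure P^a(T_1,Z,f). -/
open MeasureTheory Set Filter Topology
open scoped ENNReal symmDiff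

namespace WTP

variable {k : ℕ}

/-- cumulative weight `a 1 + … + a i` (zero-indexed: `a 0 + … + a i`). -/
noncomputable def cw (a : Fin k → ℝ) (i : Fin k) : ℝ := ∑ j ∈ Finset.Iic i, a j

/-- Birkhoff sum `S_n f = ∑_{l<n} f ∘ T^l`. -/
noncomputable def birk {X : Type*} (T : X → X) (f : X → ℝ) (n : ℕ) (x : X) : ℝ :=
  ∑ l ∈ Finset.range n, f (T^[l] x)

/-- a (finite) open cover of a topological space. -/
def IsOpenCover {X : Type*} [TopologicalSpace X] (𝒰 : Set (Set X)) : Prop :=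
  𝒰.Finite ∧ (∀ U ∈ 𝒰, IsOpen U) ∧ ⋃₀ 𝒰 = Set.univ

/-- pullback of a cover along a map. -/
def pullCov {X Y : Type*} (g : X → Y) (𝒰 : Set (Set Y)) : Set (Set X) :=
  (fun U => g ⁻¹' U) '' 𝒰

/-- the quantity `exp(−s·n + (1/a₁)·sup_{x∈A} S_{⌈a₁ n⌉} f(x))`, as an element of `ℝ≥0∞`. -/
noncomputable def pterm {X : Type*} (T1 : X → X) (f : X → ℝ) (a1 s : ℝ) (n : ℕ)
    (A : Set X) : ℝ≥0∞ :=
  ENNReal.ofReal (Real.exp (-(s * n) + (1 / a1) * sSup (birk T1 f ⌈a1 * (n : ℝ)⌉₊ '' A)))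

/-- the weighted Bowen ball `B_n^𝐚(x, ε)`. -/
def wBowen {X : Fin k → Type*} [∀ i, MetricSpace (X i)] {X1 : Type*}
    (T : ∀ i, X i → X i) (τ : ∀ i, X1 → X i) (a : Fin k → ℝ)
    (n : ℕ) (x : X1) (ε : ℝ) : Set X1 :=
  {y | ∀ i : Fin k, ∀ j < ⌈cw a i * (n : ℝ)⌉₊,
      dist ((T i)^[j] (τ i x)) ((T i)^[j] (τ i y)) < ε}

section Bowen

variable [NeZero k] {X : Fin k → Type*} [∀ i, MetricSpace (X i)] {X1 : Type*}
  [MeasurableSpace X1]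

/-- `Λ^{𝐚,s}_{N,ε}(Z,f)`. -/
noncomputable def lamBowenN (T1 : X1 → X1) (T : ∀ i, X i → X i) (τ : ∀ i, X1 → X i)
    (a : Fin k → ℝ) (f : X1 → ℝ) (s ε : ℝ) (N : ℕ) (Z : Set X1) : ℝ≥0∞ :=
  ⨅ (D : Set (ℕ × Set X1)) (_ : D.Countable)
    (_ : ∀ p ∈ D, N ≤ p.1 ∧ MeasurableSet p.2 ∧ ∃ x : X1, p.2 ⊆ wBowen T τ a p.1 x ε)
    (_ : Z ⊆ ⋃ p ∈ D, p.2),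
    ∑' p : D, pterm T1 f (a 0) s p.1.1 p.1.2

/-- `Λ^{𝐚,s}_{ε}(Z,f) = lim_{N→∞} Λ^{𝐚,s}_{N,ε}(Z,f)` (an increasing limit). -/
noncomputable def lamBowen (T1 : X1 → X1) (T : ∀ i, X i → X i) (τ : ∀ i, X1 → X i)
    (a : Fin k → ℝ) (f : X1 → ℝ) (s ε : ℝ) (Z : Set X1) : ℝ≥0∞ :=
  ⨆ N : ℕ, lamBowenN T1 T τ a f s ε N Z

/-- `P^𝐚(T₁, Z, ε, f) = inf {s : Λ^{𝐚,s}_ε(Z,f) = 0}`. -/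
noncomputable def PBowenEps (T1 : X1 → X1) (T : ∀ i, X i → X i) (τ : ∀ i, X1 → X i)
    (a : Fin k → ℝ) (Z : Set X1) (f : X1 → ℝ) (ε : ℝ) : EReal :=
  sInf (Real.toEReal '' {s : ℝ | lamBowen T1 T τ a f s ε Z = 0})

/-- the 𝐚-weighted topological pressure `P^𝐚(T₁, Z, f) = lim_{ε→0} P^𝐚(T₁, Z, ε, f)`
(an increasing limit as `ε` decreases to `0`). -/
noncomputable def PBowen (T1 : X1 → X1) (T : ∀ i, X i → X i) (τ : ∀ i, X1 → X i)
    (a : Fin k → ℝ) (Z : Set X1) (f : X1 → ℝ) : EReal :=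
  ⨆ ε : {e : ℝ // 0 < e}, PBowenEps T1 T τ a Z f ε.1

/-- `W^{𝐚,s}_{N,ε}(Z,f)`. -/
noncomputable def wBowenWN (T1 : X1 → X1) (T : ∀ i, X i → X i) (τ : ∀ i, X1 → X i)
    (a : Fin k → ℝ) (f : X1 → ℝ) (s ε : ℝ) (N : ℕ) (Z : Set X1) : ℝ≥0∞ :=
  ⨅ (D : Set (ℕ × Set X1 × ℝ≥0∞)) (_ : D.Countable)
    (_ : ∀ p ∈ D, N ≤ p.1 ∧ MeasurableSet p.2.1 ∧ 0 < p.2.2 ∧ p.2.2 ≠ ⊤ ∧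
        ∃ x : X1, p.2.1 ⊆ wBowen T τ a p.1 x ε)
    (_ : ∀ z ∈ Z, 1 ≤ ∑' p : D, (p.1.2.1).indicator (fun _ => p.1.2.2) z),
    ∑' p : D, p.1.2.2 * pterm T1 f (a 0) s p.1.1 p.1.2.1

/-- `W^{𝐚,s}_{ε}(Z,f)`. -/
noncomputable def wBowenW (T1 : X1 → X1) (T : ∀ i, X i → X i) (τ : ∀ i, X1 → X i)
    (a : Fin k → ℝ) (f : X1 → ℝ) (s ε : ℝ) (Z : Set X1) : ℝ≥0∞ :=
  ⨆ N : ℕ, wBowenWN T1 T τ a f s ε N Z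

/-- `P_W^𝐚(T₁, Z, ε, f)`. -/
noncomputable def PWBowenEps (T1 : X1 → X1) (T : ∀ i, X i → X i) (τ : ∀ i, X1 → X i)
    (a : Fin k → ℝ) (Z : Set X1) (f : X1 → ℝ) (ε : ℝ) : EReal :=
  sInf (Real.toEReal '' {s : ℝ | wBowenW T1 T τ a f s ε Z = 0})

/-- the average 𝐚-weighted topological pressure `P_W^𝐚(T₁, Z, f)`. -/
noncomputable def PWBowen (T1 : X1 → X1) (T : ∀ i, X i → X i) (τ : ∀ i, X1 → X i)
    (a : Fin k → ℝ) (Z : Set X1) (f : X1 → ℝ) : EReal :=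
  ⨆ ε : {e : ℝ // 0 < e}, PWBowenEps T1 T τ a Z f ε.1

end Bowen

section Local

variable [NeZero k] {X1 : Type*} [MeasurableSpace X1]

/-- the cover `⋁_{i=1}^k (τ_{i-1}^{-1} 𝒰_i)_0^{⌈(a_1+…+a_i) n⌉ - 1}` on the first space, where
`𝒱 i` is the pulled back cover `τ_{i-1}^{-1} 𝒰_i`. -/
def jointFiber (T1 : X1 → X1) (a : Fin k → ℝ) (𝒱 : Fin k → Set (Set X1)) (n : ℕ) :
    Set (Set X1) :=
  {A | ∃ V : Fin k → ℕ → Set X1,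
      (∀ i, ∀ l < ⌈cw a i * (n : ℝ)⌉₊, V i l ∈ 𝒱 i) ∧
      A = ⋂ i : Fin k, ⋂ l ∈ Finset.range ⌈cw a i * (n : ℝ)⌉₊, (T1^[l]) ⁻¹' V i l}

/-- `Λ^{𝐚,s}_{N,{𝒰_i}}(Z,f)`. -/
noncomputable def lamLocN (T1 : X1 → X1) (a : Fin k → ℝ) (𝒱 : Fin k → Set (Set X1))
    (f : X1 → ℝ) (s : ℝ) (N : ℕ) (Z : Set X1) : ℝ≥0∞ :=
  ⨅ (D : Set (ℕ × Set X1)) (_ : D.Countable)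
    (_ : ∀ p ∈ D, N ≤ p.1 ∧ MeasurableSet p.2 ∧ ∃ A ∈ jointFiber T1 a 𝒱 p.1, p.2 ⊆ A)
    (_ : Z ⊆ ⋃ p ∈ D, p.2),
    ∑' p : D, pterm T1 f (a 0) s p.1.1 p.1.2

/-- `Λ^{𝐚,s}_{{𝒰_i}}(Z,f)`. -/
noncomputable def lamLoc (T1 : X1 → X1) (a : Fin k → ℝ) (𝒱 : Fin k → Set (Set X1))
    (f : X1 → ℝ) (s : ℝ) (Z : Set X1) : ℝ≥0∞ :=
  ⨆ N : ℕ, lamLocN T1 a 𝒱 f s N Z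

/-- the local 𝐚-weighted topological pressure `P^𝐚(T₁, Z, {𝒰_i}, f)`, expressed through the
pulled-back covers `𝒱 i = τ_{i-1}^{-1} 𝒰_i`. -/
noncomputable def PLoc (T1 : X1 → X1) (a : Fin k → ℝ) (𝒱 : Fin k → Set (Set X1))
    (Z : Set X1) (f : X1 → ℝ) : EReal :=
  sInf (Real.toEReal '' {s : ℝ | lamLoc T1 a 𝒱 f s Z = 0})

/-- `W^{𝐚,s}_{N,{𝒰_i}}(Z,f)`. -/
noncomputable def wLocN (T1 : X1 → X1) (a : Fin k → ℝ) (𝒱 : Fin k → Set (Set X1))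
    (f : X1 → ℝ) (s : ℝ) (N : ℕ) (Z : Set X1) : ℝ≥0∞ :=
  ⨅ (D : Set (ℕ × Set X1 × ℝ≥0∞)) (_ : D.Countable)
    (_ : ∀ p ∈ D, N ≤ p.1 ∧ MeasurableSet p.2.1 ∧ 0 < p.2.2 ∧ p.2.2 ≠ ⊤ ∧
        ∃ A ∈ jointFiber T1 a 𝒱 p.1, p.2.1 ⊆ A)
    (_ : ∀ z ∈ Z, 1 ≤ ∑' p : D, (p.1.2.1).indicator (fun _ => p.1.2.2) z),
    ∑' p : D, p.1.2.2 * pterm T1 f (a 0) s p.1.1 p.1.2.1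

/-- `W^{𝐚,s}_{{𝒰_i}}(Z,f)`. -/
noncomputable def wLoc (T1 : X1 → X1) (a : Fin k → ℝ) (𝒱 : Fin k → Set (Set X1))
    (f : X1 → ℝ) (s : ℝ) (Z : Set X1) : ℝ≥0∞ :=
  ⨆ N : ℕ, wLocN T1 a 𝒱 f s N Z

/-- the local average 𝐚-weighted topological pressure `P_W^𝐚(T₁, Z, {𝒰_i}, f)`. -/
noncomputable def PWLoc (T1 : X1 → X1) (a : Fin k → ℝ) (𝒱 : Fin k → Set (Set X1))
    (Z : Set X1) (f : X1 → ℝ) : EReal :=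
  sInf (Real.toEReal '' {s : ℝ | wLoc T1 a 𝒱 f s Z = 0})

end Local

/-- iterated join `(𝒰)_0^{n-1} = ⋁_{l=0}^{n-1} T^{-l} 𝒰` of a cover. -/
def covJoinT {X : Type*} (T : X → X) (𝒰 : Set (Set X)) (n : ℕ) : Set (Set X) :=
  {A | ∃ u : ℕ → Set X, (∀ l < n, u l ∈ 𝒰) ∧
      A = ⋂ l ∈ Finset.range n, (T^[l]) ⁻¹' u l}

/-- the join `⋁_{j=i}^{k} 𝒱 j` of covers of a single space (in applications
`𝒱 j = τ_{j-1}^{-1} 𝒰_j`). -/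
def joinFrom {X1 : Type*} (𝒱 : Fin k → Set (Set X1)) (i : Fin k) : Set (Set X1) :=
  {A | ∃ V : Fin k → Set X1, (∀ j, i ≤ j → V j ∈ 𝒱 j) ∧ A = ⋂ j ∈ Finset.Ici i, V j}

/-- a finite measurable partition (indexed). -/
def IsPart {X : Type*} [MeasurableSpace X] {ι : Type*} (β : ι → Set X) : Prop :=
  (∀ i, MeasurableSet (β i)) ∧ (∀ i j, i ≠ j → Disjoint (β i) (β j)) ∧ ⋃ i, β i = Set.univ

/-- the static entropy `H_μ(β) = -∑ μ(B) log μ(B)` of a finite (indexed) partition. -/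
noncomputable def entH {X : Type*} [MeasurableSpace X] {ι : Type*} [Fintype ι]
    (μ : Measure X) (β : ι → Set X) : ℝ :=
  ∑ i, Real.negMulLog (μ (β i)).toReal

/-- the dynamical join `⋁_{l=0}^{n-1} T^{-l} β` of a partition. -/
def dynJoin {X : Type*} (T : X → X) {ι : Type*} (β : ι → Set X) (n : ℕ) :
    (Fin n → ι) → Set X :=
  fun c => ⋂ l : Fin n, (T^[(l : ℕ)]) ⁻¹' β (c l)

/-- the measure-theoretic entropy `h_μ(T, β) = lim_n (1/n) H_μ(⋁_{l<n} T^{-l}β)` of `T`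
relative to a finite partition. -/
noncomputable def hPart {X : Type*} [MeasurableSpace X] {ι : Type*} [Fintype ι]
    (μ : Measure X) (T : X → X) (β : ι → Set X) : EReal :=
  Filter.liminf (fun n : ℕ => ((entH μ (dynJoin T β n) / n : ℝ) : EReal)) Filter.atTop

/-- the Kolmogorov–Sinai entropy `h_μ(T)`. -/
noncomputable def hKS {X : Type*} [MeasurableSpace X] (μ : Measure X) (T : X → X) : EReal :=
  ⨆ p : (Σ m : ℕ, {β : Fin m → Set X // IsPart β}), hPart μ T p.2.1

/-- `H_μ(𝒰) = inf {H_μ(β) : β a finite measurable partition refining 𝒰}`. -/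
noncomputable def covH {X : Type*} [MeasurableSpace X] (μ : Measure X)
    (𝒰 : Set (Set X)) : ℝ :=
  sInf {h : ℝ | ∃ (m : ℕ) (β : Fin m → Set X), IsPart β ∧
      (∀ i, ∃ U ∈ 𝒰, β i ⊆ U) ∧ h = entH μ β}

/-- the local measure-theoretic entropy `h_μ(T, 𝒰) = lim_n (1/n) H_μ((𝒰)_0^{n-1})` of `T`
relative to an open cover. -/
noncomputable def hCov {X : Type*} [MeasurableSpace X] (μ : Measure X) (T : X → X)
    (𝒰 : Set (Set X)) : EReal :=
  Filter.liminf (fun n : ℕ => ((covH μ (covJoinT T 𝒰 n) / n : ℝ) : EReal)) Filter.atTop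

/-- `h⁺_μ(T,𝒰) = inf {h_μ(T,β) : β a finite measurable partition refining 𝒰}`. -/
noncomputable def hCovPlus {X : Type*} [MeasurableSpace X] (μ : Measure X) (T : X → X)
    (𝒰 : Set (Set X)) : EReal :=
  ⨅ p : (Σ m : ℕ, {β : Fin m → Set X // IsPart β ∧ ∀ i, ∃ U ∈ 𝒰, β i ⊆ U}),
    hPart μ T p.2.1

/-- the join `⋁_{j=i}^{k} γ j` of partitions of a single space (in applications
`γ j = τ_{j-1}^{-1} α_j`). -/
def partJoinFrom {X1 : Type*} {ι : Fin k → Type*} (γ : ∀ j, ι j → Set X1) (i : Fin k) :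
    (∀ j : {j : Fin k // i ≤ j}, ι j) → Set X1 :=
  fun c => ⋂ j : {j : Fin k // i ≤ j}, γ j (c j)

/-- the partition `⋁_{i=1}^k (γ_i)_0^{⌈(a_1+…+a_i)N⌉-1}` on the first space, where
`γ i = τ_{i-1}^{-1} α_i`. -/
def bigPartJoin {X1 : Type*} (T1 : X1 → X1) (a : Fin k → ℝ) {ι : Fin k → Type*}
    (γ : ∀ i, ι i → Set X1) (N : ℕ) :
    (∀ i : Fin k, Fin ⌈cw a i * (N : ℝ)⌉₊ → ι i) → Set X1 :=
  fun c => ⋂ i : Fin k, ⋂ l : Fin ⌈cw a i * (N : ℝ)⌉₊, (T1^[(l : ℕ)]) ⁻¹' γ i (c i l)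

/-- conditional entropy `H_μ(γ|β) = H_μ(γ ∨ β) - H_μ(β)`. -/
noncomputable def condEnt {X : Type*} [MeasurableSpace X] {ι κ : Type*} [Fintype ι] [Fintype κ]
    (μ : Measure X) (γ : ι → Set X) (β : κ → Set X) : ℝ :=
  entH μ (fun p : ι × κ => γ p.1 ∩ β p.2) - entH μ β

/-- the oscillation `w_f(⋁_{i=1}^k τ_{i-1}^{-1} 𝒰_i)` of `f` on the joined cover, where
`𝒱 i = τ_{i-1}^{-1} 𝒰_i`. -/
noncomputable def wfJoin {X1 : Type*} (f : X1 → ℝ) (𝒱 : Fin k → Set (Set X1)) : ℝ :=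
  sSup {d : ℝ | ∃ V : Fin k → Set X1, (∀ i, V i ∈ 𝒱 i) ∧
      ∃ x ∈ ⋂ i, V i, ∃ y ∈ ⋂ i, V i, d = |f x - f y|}

/-- the topological support of a measure. -/
def msupp {X : Type*} [TopologicalSpace X] [MeasurableSpace X] (μ : Measure X) : Set X :=
  {x | ∀ U : Set X, IsOpen U → x ∈ U → 0 < μ U}

/-!
Local covers and Bowen balls compare in both directions: a tuple of covers of diameter `< ε`
refines the weighted Bowen balls of radius `ε`, and a common Lebesgue number `δ` of the covers
puts every Bowen ball of radius `δ` inside a member of the joined cover. This gives the supremum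
and the limit.

For `P^𝐚 ≤ P_W^𝐚`, sort the members of a weighted cover by their length `n` and fix geometric
thresholds `t_n` with `∑ t_n < 1`: every point of `Z` then gets weight `> t_n` from the members
of some length `n`. A maximal `2ε`-separated set of such points meets each `ε`-Bowen ball at most
once, so the `2ε`-Bowen balls around it cover at cost at most `1 / t_n` times the weighted cost
of length `n`. On the larger balls the Birkhoff sums grow by at most `w` per step, where `w` is
the oscillation of `f` at scale `2ε`; raising `s` by `δ > w` absorbs this and the factor `1 / t_n`.
-/

theorem exists_maximal_pairwise_not {α : Type*} (r : α → α → Prop)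
    (hr : ∀ u v, r u v → r v u) (s : Set α) :
    ∃ t ⊆ s, t.Pairwise (fun u v => ¬ r u v) ∧ ∀ z ∈ s, z ∈ t ∨ ∃ u ∈ t, r u z := by
  obtain ⟨t, ⟨hts, ht⟩, hmax⟩ := zorn_subset {t | t ⊆ s ∧ t.Pairwise (fun u v => ¬ r u v)}
    fun c hc hchain => ⟨⋃₀ c, ⟨Set.sUnion_subset fun t ht => (hc ht).1,
      (Set.pairwise_sUnion hchain.directedOn).2 fun t ht => (hc ht).2⟩,
      fun _ => Set.subset_sUnion_of_mem⟩
  refine ⟨t, hts, ht, fun z hz => or_iff_not_imp_right.2 fun hfar => ?_⟩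
  have hins : insert z t ∈ {t | t ⊆ s ∧ t.Pairwise (fun u v => ¬ r u v)} :=
    ⟨Set.insert_subset hz hts, Set.pairwise_insert.2 ⟨ht, fun u hu _ =>
      ⟨fun hzu => hfar ⟨u, hu, hr z u hzu⟩, fun huz => hfar ⟨u, hu, huz⟩⟩⟩⟩
  exact hmax hins (Set.subset_insert z t) (Set.mem_insert z t)

theorem tsum_indicator_le_of_subsingleton {X : Type*} {S A : Set X} (h : (S ∩ A).Subsingleton)
    (c : ℝ≥0∞) : ∑' u : S, A.indicator (fun _ => c) u ≤ c := by
  by_cases hne : (S ∩ A).Nonempty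
  · obtain ⟨u₀, hS, hA⟩ := hne
    rw [tsum_eq_single ⟨u₀, hS⟩ fun u hu => Set.indicator_of_notMem
      (fun huA => hu (Subtype.ext (h ⟨u.2, huA⟩ ⟨hS, hA⟩))) _]
    simp [Set.indicator_of_mem hA]
  · rw [ENNReal.tsum_eq_zero.2 fun u : S =>
      Set.indicator_of_notMem (fun huA => hne ⟨u, u.2, huA⟩) _]
    exact zero_le

theorem exists_subset_cover_subsingleton_inter {X κ : Type*} (B : X → Set X)
    (hB_self : ∀ u, u ∈ B u) (hB_symm : ∀ u v, v ∈ B u → u ∈ B v) (A : κ → Set X)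
    (hA : ∀ j, ∀ u ∈ A j, ∀ v ∈ A j, v ∈ B u) (Y : Set X) :
    ∃ S ⊆ Y, Y ⊆ ⋃ u ∈ S, B u ∧ ∀ j, (S ∩ A j).Subsingleton := by
  obtain ⟨S, hSY, hsep, hcov⟩ := exists_maximal_pairwise_not (fun u v => v ∈ B u) hB_symm Y
  refine ⟨S, hSY, fun z hz => ?_, fun j u hu v hv => ?_⟩
  · rcases hcov z hz with hzS | ⟨u, hu, hzu⟩
    · exact Set.mem_biUnion hzS (hB_self z)
    · exact Set.mem_biUnion hu hzu
  · by_contra huv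
    exact hsep hu.1 hv.1 huv (hA j u hu.2 v hv.2)

section LevelMass

variable {X ι : Type*} (n : ι → ℕ) (A : ι → Set X) (c : ι → ℝ≥0∞)

noncomputable def levelMass (m : ℕ) (z : X) : ℝ≥0∞ :=
  ∑' i, if n i = m then (A i).indicator (fun _ => c i) z else 0

variable {n A c}

theorem tsum_levelMass (z : X) :
    ∑' m, levelMass n A c m z = ∑' i, (A i).indicator (fun _ => c i) z := by
  simp only [levelMass]
  rw [ENNReal.tsum_comm]
  exact tsum_congr fun i => tsum_ite_eq' (n i) _

theorem exists_mem_of_levelMass_ne_zero {m : ℕ} {z : X} (h : levelMass n A c m z ≠ 0) :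
    ∃ i, n i = m ∧ z ∈ A i := by
  by_contra! hz
  refine h (ENNReal.tsum_eq_zero.2 fun i => ?_)
  split_ifs with hi
  · exact Set.indicator_of_notMem (hz i hi) _
  · rfl

theorem tsum_le_of_le_levelMass {m : ℕ} {S : Set X}
    (hS : ∀ i, n i = m → (S ∩ A i).Subsingleton) {t : ℝ≥0∞} (ht0 : t ≠ 0) (ht : t ≠ ⊤)
    (hSt : ∀ u ∈ S, t ≤ levelMass n A c m u) {g : X → ℝ≥0∞} {h : ι → ℝ≥0∞} {C : ℝ≥0∞}
    (hg : ∀ i, n i = m → ∀ u ∈ A i, g u ≤ C * t * h i) :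
    ∑' u : S, g u ≤ C * ∑' i, if n i = m then c i * h i else 0 := by
  rw [← ENNReal.mul_le_mul_iff_right ht0 ht, ← ENNReal.tsum_mul_left]
  calc ∑' u : S, t * g u
      ≤ ∑' u : S, ∑' i, if n i = m then (A i).indicator (fun _ => c i * (C * t * h i)) u
          else 0 := by
        refine ENNReal.tsum_le_tsum fun u => ?_
        refine (mul_le_mul_left (hSt u u.2) _).trans ?_
        rw [levelMass, ← ENNReal.tsum_mul_right]
        refine ENNReal.tsum_le_tsum fun i => ?_
        split_ifs with hi
        · by_cases hu : (u : X) ∈ A i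
          · simp only [Set.indicator_of_mem hu]
            gcongr
            exact hg i hi u hu
          · simp [Set.indicator_of_notMem hu]
        · simp
    _ ≤ ∑' i, if n i = m then c i * (C * t * h i) else 0 := by
        rw [ENNReal.tsum_comm]
        refine ENNReal.tsum_le_tsum fun i => ?_
        split_ifs with hi
        · exact tsum_indicator_le_of_subsingleton (hS i hi) _
        · simp
    _ = t * (C * ∑' i, if n i = m then c i * h i else 0) := by
        rw [← ENNReal.tsum_mul_left, ← ENNReal.tsum_mul_left]
        refine tsum_congr fun i => ?_
        split_ifs <;> ring

theorem exists_countable_cover_tsum_le [Countable ι] (B : ℕ → X → Set X)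
    (hB_self : ∀ m u, u ∈ B m u) (hB_symm : ∀ m u v, v ∈ B m u → u ∈ B m v)
    (hA : ∀ i, ∀ u ∈ A i, ∀ v ∈ A i, v ∈ B (n i) u) {g : ℕ → X → ℝ≥0∞} {h : ι → ℝ≥0∞}
    {t : ℕ → ℝ≥0∞} {C : ℝ≥0∞} (hg : ∀ i, ∀ u ∈ A i, g (n i) u ≤ C * t (n i) * h i)
    (ht0 : ∀ m, t m ≠ 0) (ht : ∑' m, t m < 1) {Z : Set X}
    (hZ : ∀ z ∈ Z, 1 ≤ ∑' i, (A i).indicator (fun _ => c i) z) :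
    ∃ S : ℕ → Set X, (∀ m, (S m).Countable) ∧ (∀ m, ∀ u ∈ S m, ∃ i, n i = m ∧ u ∈ A i) ∧
      Z ⊆ ⋃ m, ⋃ u ∈ S m, B m u ∧ ∑' m, ∑' u : S m, g m u ≤ C * ∑' i, c i * h i := by
  have hZ_level : ∀ z ∈ Z, ∃ m, t m < levelMass n A c m z := by
    intro z hz
    by_contra! hle
    exact ((hZ z hz).trans ((tsum_levelMass z).symm.trans_le (ENNReal.tsum_le_tsum hle))).not_gt ht
  choose S hSY hYS hSA using fun m => exists_subset_cover_subsingleton_inter (B m) (hB_self m)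
    (hB_symm m) (fun j : {i // n i = m} => A j) (fun ⟨i, hi⟩ => hi ▸ hA i)
    {z ∈ Z | t m < levelMass n A c m z}
  have hS_mem : ∀ m, ∀ u ∈ S m, ∃ i, n i = m ∧ u ∈ A i := fun m u hu =>
    exists_mem_of_levelMass_ne_zero (zero_le.trans_lt (hSY m hu).2).ne'
  refine ⟨S, fun m => ?_, hS_mem, fun z hz => ?_, ?_⟩
  · refine (Set.countable_iUnion fun j : {i // n i = m} => (hSA m j).countable).mono
      fun u hu => ?_
    obtain ⟨i, hi, hui⟩ := hS_mem m u hu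
    exact Set.mem_iUnion.2 ⟨⟨i, hi⟩, hu, hui⟩
  · obtain ⟨m, hm⟩ := hZ_level z hz
    exact Set.mem_iUnion.2 ⟨m, hYS m ⟨hz, hm⟩⟩
  · calc ∑' m, ∑' u : S m, g m u ≤ ∑' m, C * ∑' i, if n i = m then c i * h i else 0 :=
          ENNReal.tsum_le_tsum fun m => tsum_le_of_le_levelMass (fun i hi => hSA m ⟨i, hi⟩)
            (ht0 m) (ENNReal.ne_top_of_tsum_ne_top ht.ne_top m) (fun u hu => (hSY m hu).2.le)
            fun i hi => hi ▸ hg i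
      _ = C * ∑' i, c i * h i := by
          rw [ENNReal.tsum_mul_left, ENNReal.tsum_comm]
          exact congrArg _ (tsum_congr fun i => tsum_ite_eq' (n i) _)

end LevelMass

theorem exists_threshold_tsum_lt_one {β : ℝ} (hβ : 0 < β) (K : ℝ) :
    ∃ (t : ℕ → ℝ≥0∞) (C : ℝ≥0∞), C ≠ ⊤ ∧ (∀ m, t m ≠ 0) ∧ ∑' m, t m < 1 ∧
      ∀ m : ℕ, ENNReal.ofReal (Real.exp (K - β * m)) = C * t m := by
  set r := Real.exp (-β)
  have hr0 : 0 < r := Real.exp_pos _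
  have hr1 : r < 1 := Real.exp_lt_one_iff.2 (neg_lt_zero.2 hβ)
  set θ := (1 - r) / 2
  have hθ : 0 < θ := by simp only [θ]; linarith
  refine ⟨fun m => ENNReal.ofReal (θ * r ^ m), ENNReal.ofReal (Real.exp K / θ),
    ENNReal.ofReal_ne_top, fun m => (ENNReal.ofReal_pos.2 (by positivity)).ne', ?_, fun m => ?_⟩
  · rw [← ENNReal.ofReal_tsum_of_nonneg (fun m => by positivity)
      ((summable_geometric_of_lt_one hr0.le hr1).mul_left θ), tsum_mul_left,
      tsum_geometric_of_lt_one hr0.le hr1, ENNReal.ofReal_lt_one]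
    have : 0 < 1 - r := by linarith
    simp only [θ]
    field_simp
    norm_num
  · rw [← ENNReal.ofReal_mul (by positivity), ← Real.exp_nat_mul,
      show Real.exp K / θ * (θ * Real.exp (m * -β)) = Real.exp K * Real.exp (m * -β) by
        field_simp, ← Real.exp_add]
    ring_nf

theorem exists_lebesgue_number_of_isOpenCover {ι : Type*} [Finite ι] {Y : ι → Type*}
    [∀ i, MetricSpace (Y i)] [∀ i, CompactSpace (Y i)] {𝒰 : ∀ i, Set (Set (Y i))}
    (h𝒰 : ∀ i, IsOpenCover (𝒰 i)) :
    ∃ δ > 0, ∀ i, ∀ y : Y i, ∃ U ∈ 𝒰 i, Metric.ball y δ ⊆ U := by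
  have h : ∀ i, ∀ᶠ δ in 𝓝[>] (0 : ℝ), ∀ y : Y i, ∃ U ∈ 𝒰 i, Metric.ball y δ ⊆ U := by
    intro i
    obtain ⟨δ, hδ, hleb⟩ := lebesgue_number_lemma_of_metric isCompact_univ
      (c := fun U : 𝒰 i => (U : Set (Y i))) (fun U => (h𝒰 i).2.1 U U.2)
      (by rw [← Set.sUnion_eq_iUnion, (h𝒰 i).2.2])
    filter_upwards [Ioc_mem_nhdsGT hδ] with δ' hδ' y
    obtain ⟨U, hU⟩ := hleb y trivial
    exact ⟨U, U.2, (Metric.ball_subset_ball hδ'.2).trans hU⟩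
  obtain ⟨δ, hδ, hδ0⟩ := ((Filter.eventually_all.2 h).and self_mem_nhdsWithin).exists
  exact ⟨δ, hδ0, hδ⟩

theorem exists_isOpenCover_diam_lt {Y : Type*} [MetricSpace Y] [CompactSpace Y] {ε : ℝ}
    (hε : 0 < ε) : ∃ 𝒰 : Set (Set Y), IsOpenCover 𝒰 ∧ ∀ U ∈ 𝒰, Metric.diam U < ε := by
  obtain ⟨t, -, ht, hcov⟩ := finite_cover_balls_of_compact (isCompact_univ (X := Y))
    (by positivity : 0 < ε / 4)
  refine ⟨(Metric.ball · (ε / 4)) '' t, ⟨ht.image _, ?_, ?_⟩, ?_⟩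
  · rintro _ ⟨y, -, rfl⟩
    exact Metric.isOpen_ball
  · rw [Set.sUnion_image]
    exact Set.univ_subset_iff.1 hcov
  · rintro _ ⟨y, -, rfl⟩
    exact (Metric.diam_ball (by positivity)).trans_lt (by linarith)

theorem sInf_image_setOf_eq_zero_mono {g₁ g₂ : ℝ → ℝ≥0∞} (h : ∀ s, g₁ s ≤ g₂ s) :
    sInf (Real.toEReal '' {s | g₁ s = 0}) ≤ sInf (Real.toEReal '' {s | g₂ s = 0}) :=
  sInf_le_sInf (Set.image_mono fun s hs => nonpos_iff_eq_zero.1 ((h s).trans_eq hs))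

section BowenBall

variable {k : ℕ} {X : Fin k → Type*} [∀ i, MetricSpace (X i)] {X1 : Type*}
  {T : ∀ i, X i → X i} {τ : ∀ i, X1 → X i} {a : Fin k → ℝ} {n : ℕ}

theorem mem_wBowen_comm {x y : X1} {ε : ℝ} :
    y ∈ wBowen T τ a n x ε ↔ x ∈ wBowen T τ a n y ε := by
  simp only [wBowen, Set.mem_ofPred_eq, dist_comm]

theorem mem_wBowen_self (x : X1) {ε : ℝ} (hε : 0 < ε) : x ∈ wBowen T τ a n x ε :=
  fun i j _ => by simpa using hε

theorem mem_wBowen_add {x y z : X1} {ε₁ ε₂ : ℝ} (hy : y ∈ wBowen T τ a n x ε₁)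
    (hz : z ∈ wBowen T τ a n x ε₂) : z ∈ wBowen T τ a n y (ε₁ + ε₂) := fun i j hj =>
  (dist_triangle_left _ _ _).trans_lt (add_lt_add (hy i j hj) (hz i j hj))

theorem wBowen_mono (x : X1) {ε ε' : ℝ} (h : ε ≤ ε') :
    wBowen T τ a n x ε ⊆ wBowen T τ a n x ε' :=
  fun _ hy i j hj => (hy i j hj).trans_le h

theorem isOpen_wBowen [TopologicalSpace X1] (hT : ∀ i, Continuous (T i))
    (hτ : ∀ i, Continuous (τ i)) (x : X1) (ε : ℝ) : IsOpen (wBowen T τ a n x ε) := by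
  have : wBowen T τ a n x ε = ⋂ i, ⋂ j : Fin ⌈cw a i * (n : ℝ)⌉₊,
      (fun y => (T i)^[j] (τ i y)) ⁻¹' Metric.ball ((T i)^[j] (τ i x)) ε := by
    ext y
    simp [wBowen, dist_comm, Fin.forall_iff]
  rw [this]
  exact isOpen_iInter_of_finite fun i => isOpen_iInter_of_finite fun j =>
    Metric.isOpen_ball.preimage (((hT i).iterate _).comp (hτ i))

end BowenBall

theorem cw_zero {k : ℕ} [NeZero k] (a : Fin k → ℝ) : cw a 0 = a 0 := by
  rw [cw, show Finset.Iic (0 : Fin k) = {0} by ext; simp, Finset.sum_singleton]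

theorem dist_iterate_lt_of_mem_wBowen {k : ℕ} [NeZero k] {X : Fin k → Type*}
    [∀ i, MetricSpace (X i)] {T : ∀ i, X i → X i} {τ : ∀ i, X 0 → X i} (hτ0 : τ 0 = id)
    {a : Fin k → ℝ} {n : ℕ} {x y : X 0} {ε : ℝ} (hy : y ∈ wBowen T τ a n x ε) {l : ℕ}
    (hl : l < ⌈a 0 * n⌉₊) : dist ((T 0)^[l] x) ((T 0)^[l] y) < ε := by
  simpa [hτ0] using hy 0 l (by rwa [cw_zero])

section Birkhoff

variable {Y : Type*} {T : Y → Y} {f : Y → ℝ}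

theorem birk_le_add {m : ℕ} {x y : Y} {w : ℝ} (h : ∀ l < m, f (T^[l] y) ≤ f (T^[l] x) + w) :
    birk T f m y ≤ birk T f m x + m * w := by
  calc birk T f m y ≤ ∑ l ∈ Finset.range m, (f (T^[l] x) + w) :=
        Finset.sum_le_sum fun l hl => h l (Finset.mem_range.1 hl)
    _ = birk T f m x + m * w := by simp [birk, Finset.sum_add_distrib]

theorem bddAbove_birk_image (hf : BddAbove (Set.range f)) (m : ℕ) (A : Set Y) :
    BddAbove (birk T f m '' A) := by
  obtain ⟨M, hM⟩ := hf
  refine ⟨m * M, ?_⟩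
  rintro _ ⟨x, -, rfl⟩
  calc birk T f m x ≤ ∑ _l ∈ Finset.range m, M := Finset.sum_le_sum fun l _ => hM ⟨_, rfl⟩
    _ = m * M := by simp

end Birkhoff

theorem pterm_wBowen_le {k : ℕ} [NeZero k] {X : Fin k → Type*} [∀ i, MetricSpace (X i)]
    {T : ∀ i, X i → X i} {τ : ∀ i, X 0 → X i} (hτ0 : τ 0 = id) {a : Fin k → ℝ} (ha : 0 < a 0)
    {f : X 0 → ℝ} (hf : BddAbove (Set.range f)) {r w : ℝ} (hr : 0 < r) (hw0 : 0 ≤ w)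
    (hw : ∀ x y, dist x y < r → |f x - f y| ≤ w) {A : Set (X 0)} {u : X 0} (hu : u ∈ A)
    (s δ : ℝ) (n : ℕ) :
    pterm (T 0) f (a 0) (s + δ) n (wBowen T τ a n u r) ≤
      ENNReal.ofReal (Real.exp (w / a 0 - (δ - w) * n)) * pterm (T 0) f (a 0) s n A := by
  set m := ⌈a 0 * n⌉₊
  have hball : sSup (birk (T 0) f m '' wBowen T τ a n u r) ≤
      sSup (birk (T 0) f m '' A) + m * w := by
    refine csSup_le ((Set.nonempty_of_mem (mem_wBowen_self u hr)).image _) ?_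
    rintro _ ⟨y, hy, rfl⟩
    refine (birk_le_add fun l hl => ?_).trans
      (add_le_add_left (le_csSup (bddAbove_birk_image hf m A) ⟨u, hu, rfl⟩) _)
    linarith [neg_abs_le (f ((T 0)^[l] u) - f ((T 0)^[l] y)),
      hw _ _ (dist_iterate_lt_of_mem_wBowen hτ0 hy hl)]
  have hm : (m : ℝ) ≤ a 0 * n + 1 := (Nat.ceil_lt_add_one (by positivity)).le
  have hsup : 1 / a 0 * sSup (birk (T 0) f m '' wBowen T τ a n u r) ≤
      1 / a 0 * sSup (birk (T 0) f m '' A) + (n * w + w / a 0) := by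
    calc 1 / a 0 * sSup (birk (T 0) f m '' wBowen T τ a n u r)
        ≤ 1 / a 0 * (sSup (birk (T 0) f m '' A) + (a 0 * n + 1) * w) := by
          gcongr
          exact hball.trans (by gcongr)
      _ = 1 / a 0 * sSup (birk (T 0) f m '' A) + (n * w + w / a 0) := by
          field_simp
  rw [pterm, pterm, ← ENNReal.ofReal_mul (Real.exp_pos _).le, ← Real.exp_add]
  exact ENNReal.ofReal_le_ofReal (Real.exp_le_exp.2 (by linarith))

section Comparison

variable {k : ℕ} [NeZero k] {X : Fin k → Type*} [∀ i, MetricSpace (X i)]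
  {T : ∀ i, X i → X i} {τ : ∀ i, X 0 → X i} {a : Fin k → ℝ} {𝒰 : ∀ i, Set (Set (X i))}

theorem jointFiber_subset_wBowen [∀ i, CompactSpace (X i)]
    (hτe : ∀ i, Function.Semiconj (τ i) (T 0) (T i)) {ε : ℝ}
    (hdiam : ∀ i, ∀ U ∈ 𝒰 i, Metric.diam U < ε) {n : ℕ} {A : Set (X 0)}
    (hA : A ∈ jointFiber (T 0) a (fun i => pullCov (τ i) (𝒰 i)) n) {x : X 0} (hx : x ∈ A) :
    A ⊆ wBowen T τ a n x ε := by
  obtain ⟨V, hV, rfl⟩ := hA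
  intro y hy i j hj
  obtain ⟨U, hU, hVU⟩ := hV i j hj
  simp only [Set.mem_iInter, Set.mem_preimage, Finset.mem_range] at hx hy
  have hxU := hx i j hj
  have hyU := hy i j hj
  rw [← hVU, Set.mem_preimage, (hτe i).iterate_right j] at hxU hyU
  exact (Metric.dist_le_diam_of_mem Metric.isBounded_of_compactSpace hxU hyU).trans_lt
    (hdiam i U hU)

theorem exists_jointFiber_superset_wBowen (hτe : ∀ i, Function.Semiconj (τ i) (T 0) (T i))
    {δ : ℝ} (hleb : ∀ i, ∀ y : X i, ∃ U ∈ 𝒰 i, Metric.ball y δ ⊆ U) (n : ℕ) (x : X 0) :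
    ∃ A ∈ jointFiber (T 0) a (fun i => pullCov (τ i) (𝒰 i)) n, wBowen T τ a n x δ ⊆ A := by
  choose U hU hball using hleb
  refine ⟨_, ⟨fun i l => τ i ⁻¹' U i ((T i)^[l] (τ i x)), fun i l _ => ⟨_, hU _ _, rfl⟩, rfl⟩,
    fun y hy => ?_⟩
  simp only [Set.mem_iInter, Set.mem_preimage, Finset.mem_range]
  intro i l hl
  rw [(hτe i).iterate_right l y]
  exact hball _ _ (by rw [Metric.mem_ball, dist_comm]; exact hy i l hl)

variable [MeasurableSpace (X 0)] {f : X 0 → ℝ} {Z : Set (X 0)}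

theorem lamBowenN_le_mul_tsum [OpensMeasurableSpace (X 0)] (hT : ∀ i, Continuous (T i))
    (hτc : ∀ i, Continuous (τ i)) (hτ0 : τ 0 = id) (ha : 0 < a 0)
    (hf : BddAbove (Set.range f)) {ε e w δ : ℝ} (hε : 0 < ε) (he : 2 * ε ≤ e) (hw0 : 0 ≤ w)
    (hw : ∀ x y, dist x y < 2 * ε → |f x - f y| ≤ w) {t : ℕ → ℝ≥0∞} {C : ℝ≥0∞}
    (ht0 : ∀ m, t m ≠ 0) (ht : ∑' m, t m < 1)
    (htC : ∀ m : ℕ, ENNReal.ofReal (Real.exp (w / a 0 - (δ - w) * m)) = C * t m)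
    {s : ℝ} {N : ℕ} {D : Set (ℕ × Set (X 0) × ℝ≥0∞)} (hD : D.Countable)
    (hadm : ∀ p ∈ D, N ≤ p.1 ∧ MeasurableSet p.2.1 ∧ 0 < p.2.2 ∧ p.2.2 ≠ ⊤ ∧
        ∃ x : X 0, p.2.1 ⊆ wBowen T τ a p.1 x ε)
    (hZ : ∀ z ∈ Z, 1 ≤ ∑' p : D, (p.1.2.1).indicator (fun _ => p.1.2.2) z) :
    lamBowenN (T 0) T τ a f (s + δ) e N Z ≤
      C * ∑' p : D, p.1.2.2 * pterm (T 0) f (a 0) s p.1.1 p.1.2.1 := by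
  have : Countable D := hD.to_subtype
  choose x hx using fun p : D => (hadm p p.2).2.2.2.2
  obtain ⟨S, hS, hS_mem, hZS, hsum⟩ := exists_countable_cover_tsum_le
    (n := fun p : D => p.1.1) (A := fun p => p.1.2.1) (c := fun p => p.1.2.2)
    (fun m u => wBowen T τ a m u (2 * ε)) (fun m u => mem_wBowen_self u (by positivity))
    (fun m u v => mem_wBowen_comm.1)
    (fun p u hu v hv => two_mul ε ▸ mem_wBowen_add (hx p hu) (hx p hv))
    (g := fun m u => pterm (T 0) f (a 0) (s + δ) m (wBowen T τ a m u (2 * ε)))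
    (h := fun p => pterm (T 0) f (a 0) s p.1.1 p.1.2.1)
    (fun p u hu => (pterm_wBowen_le hτ0 ha hf (by positivity) hw0 hw hu s δ _).trans_eq
      (congrArg (· * _) (htC _))) ht0 ht hZ
  have := fun m => (hS m).to_subtype
  set φ : (Σ m, S m) → ℕ × Set (X 0) := fun q => (q.1, wBowen T τ a q.1 q.2 (2 * ε))
  refine iInf_le_of_le (Set.range φ)
    (iInf_le_of_le (Set.countable_range _) (iInf_le_of_le ?_ (iInf_le_of_le ?_ ?_)))
  · rintro _ ⟨⟨m, u, hu⟩, rfl⟩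
    obtain ⟨p, rfl, -⟩ := hS_mem m u hu
    exact ⟨(hadm p p.2).1, (isOpen_wBowen hT hτc u _).measurableSet, u, wBowen_mono u he⟩
  · intro z hz
    obtain ⟨m, u, hu, hzu⟩ : ∃ m, ∃ u ∈ S m, z ∈ wBowen T τ a m u (2 * ε) := by
      simpa using hZS hz
    exact Set.mem_biUnion ⟨⟨m, u, hu⟩, rfl⟩ hzu
  · calc ∑' p : Set.range φ, pterm (T 0) f (a 0) (s + δ) p.1.1 p.1.2
        ≤ ∑' q, pterm (T 0) f (a 0) (s + δ) (φ q).1 (φ q).2 :=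
          ENNReal.tsum_le_tsum_comp_of_surjective Set.rangeFactorization_surjective
            (fun p : Set.range φ => pterm (T 0) f (a 0) (s + δ) p.1.1 p.1.2)
      _ = ∑' m, ∑' u : S m, pterm (T 0) f (a 0) (s + δ) m (wBowen T τ a m u (2 * ε)) :=
          ENNReal.tsum_sigma' (fun q : Σ m, S m => pterm (T 0) f (a 0) (s + δ) (φ q).1 (φ q).2)
      _ ≤ _ := hsum

theorem lamBowenN_le_mul_wBowenWN [OpensMeasurableSpace (X 0)] (hT : ∀ i, Continuous (T i))
    (hτc : ∀ i, Continuous (τ i)) (hτ0 : τ 0 = id) (ha : 0 < a 0)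
    (hf : BddAbove (Set.range f)) {ε e w δ : ℝ} (hε : 0 < ε) (he : 2 * ε ≤ e) (hw0 : 0 ≤ w)
    (hw : ∀ x y, dist x y < 2 * ε → |f x - f y| ≤ w) (hδ : w < δ) :
    ∃ C : ℝ≥0∞, C ≠ ⊤ ∧ ∀ s N, lamBowenN (T 0) T τ a f (s + δ) e N Z ≤
      C * wBowenWN (T 0) T τ a f s ε N Z := by
  obtain ⟨t, C, hC, ht0, ht, htC⟩ := exists_threshold_tsum_lt_one (sub_pos.2 hδ) (w / a 0)
  have hC0 : C ≠ 0 := by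
    rintro rfl
    simpa [(Real.exp_pos _).not_ge] using htC 0
  refine ⟨C, hC, fun s N => ?_⟩
  simp only [wBowenWN, ENNReal.mul_iInf_of_ne hC0 hC]
  exact le_iInf fun D => le_iInf fun hD => le_iInf fun hadm => le_iInf fun hZ =>
    lamBowenN_le_mul_tsum hT hτc hτ0 ha hf hε he hw0 hw ht0 ht htC hD hadm hZ

theorem wBowenWN_le_wLocN [∀ i, CompactSpace (X i)]
    (hτe : ∀ i, Function.Semiconj (τ i) (T 0) (T i)) {ε : ℝ}
    (hdiam : ∀ i, ∀ U ∈ 𝒰 i, Metric.diam U < ε) (s : ℝ) (N : ℕ) :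
    wBowenWN (T 0) T τ a f s ε N Z ≤ wLocN (T 0) a (fun i => pullCov (τ i) (𝒰 i)) f s N Z := by
  -- an empty member of a local family still needs some centre to be Bowen-admissible
  rcases isEmpty_or_nonempty (X 0) with hX | ⟨⟨x₀⟩⟩
  · exact iInf_le_of_le ∅ (iInf_le_of_le Set.countable_empty (iInf_le_of_le (by simp)
      (iInf_le_of_le (fun z _ => isEmptyElim z) (by simp))))
  refine le_iInf fun D => le_iInf fun hD => le_iInf fun hadm => le_iInf fun hZ =>
    iInf_le_of_le D (iInf_le_of_le hD (iInf_le_of_le (fun p hp => ?_) (iInf_le_of_le hZ le_rfl)))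
  obtain ⟨hN, hmeas, hc0, hctop, A, hA, hpA⟩ := hadm p hp
  refine ⟨hN, hmeas, hc0, hctop, ?_⟩
  rcases p.2.1.eq_empty_or_nonempty with h | ⟨x, hx⟩
  · exact ⟨x₀, h ▸ Set.empty_subset _⟩
  · exact ⟨x, hpA.trans (jointFiber_subset_wBowen hτe hdiam hA (hpA hx))⟩

theorem wLocN_le_wBowenWN (hτe : ∀ i, Function.Semiconj (τ i) (T 0) (T i)) {δ : ℝ}
    (hleb : ∀ i, ∀ y : X i, ∃ U ∈ 𝒰 i, Metric.ball y δ ⊆ U) (s : ℝ) (N : ℕ) :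
    wLocN (T 0) a (fun i => pullCov (τ i) (𝒰 i)) f s N Z ≤ wBowenWN (T 0) T τ a f s δ N Z := by
  refine le_iInf fun D => le_iInf fun hD => le_iInf fun hadm => le_iInf fun hZ =>
    iInf_le_of_le D (iInf_le_of_le hD (iInf_le_of_le (fun p hp => ?_) (iInf_le_of_le hZ le_rfl)))
  obtain ⟨hN, hmeas, hc0, hctop, x, hx⟩ := hadm p hp
  obtain ⟨A, hA, hxA⟩ := exists_jointFiber_superset_wBowen hτe hleb p.1 x
  exact ⟨hN, hmeas, hc0, hctop, A, hA, hx.trans hxA⟩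

theorem wBowenWN_le_lamBowenN (s ε : ℝ) (N : ℕ) :
    wBowenWN (T 0) T τ a f s ε N Z ≤ lamBowenN (T 0) T τ a f s ε N Z := by
  refine le_iInf fun D => le_iInf fun hD => le_iInf fun hadm => le_iInf fun hZ => ?_
  set φ : ℕ × Set (X 0) → ℕ × Set (X 0) × ℝ≥0∞ := fun p => (p.1, p.2, 1)
  refine iInf_le_of_le (φ '' D) (iInf_le_of_le (hD.image φ) (iInf_le_of_le ?_
    (iInf_le_of_le ?_ ?_)))
  · rintro _ ⟨p, hp, rfl⟩
    obtain ⟨hN, hmeas, x, hx⟩ := hadm p hp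
    exact ⟨hN, hmeas, one_pos, ENNReal.one_ne_top, x, hx⟩
  · intro z hz
    obtain ⟨p, hp, hzp⟩ : ∃ p ∈ D, z ∈ p.2 := by simpa using hZ hz
    exact le_trans (by simp [φ, hzp]) (ENNReal.le_tsum (⟨φ p, p, hp, rfl⟩ : φ '' D))
  · calc ∑' q : φ '' D, q.1.2.2 * pterm (T 0) f (a 0) s q.1.1 q.1.2.1
        ≤ ∑' p : D, (φ p).2.2 * pterm (T 0) f (a 0) s (φ p).1 (φ p).2.1 :=
          ENNReal.tsum_le_tsum_comp_of_surjective Set.imageFactorization_surjective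
            (fun q : φ '' D => q.1.2.2 * pterm (T 0) f (a 0) s q.1.1 q.1.2.1)
      _ = ∑' p : D, pterm (T 0) f (a 0) s p.1.1 p.1.2 := by simp [φ]

theorem PWLoc_le_PWBowen [∀ i, CompactSpace (X i)]
    (hτe : ∀ i, Function.Semiconj (τ i) (T 0) (T i)) (h𝒰 : ∀ i, IsOpenCover (𝒰 i)) :
    PWLoc (T 0) a (fun i => pullCov (τ i) (𝒰 i)) Z f ≤ PWBowen (T 0) T τ a Z f := by
  obtain ⟨δ, hδ, hleb⟩ := exists_lebesgue_number_of_isOpenCover h𝒰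
  exact (sInf_image_setOf_eq_zero_mono fun s => iSup_mono fun N =>
    wLocN_le_wBowenWN hτe hleb s N).trans
    (le_iSup (fun e : {e : ℝ // 0 < e} => PWBowenEps (T 0) T τ a Z f e.1) ⟨δ, hδ⟩)

theorem PWBowenEps_le_PWLoc [∀ i, CompactSpace (X i)]
    (hτe : ∀ i, Function.Semiconj (τ i) (T 0) (T i)) {ε : ℝ}
    (hdiam : ∀ i, ∀ U ∈ 𝒰 i, Metric.diam U < ε) :
    PWBowenEps (T 0) T τ a Z f ε ≤ PWLoc (T 0) a (fun i => pullCov (τ i) (𝒰 i)) Z f :=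
  sInf_image_setOf_eq_zero_mono fun s => iSup_mono fun N => wBowenWN_le_wLocN hτe hdiam s N

theorem PWBowen_le_PBowen : PWBowen (T 0) T τ a Z f ≤ PBowen (T 0) T τ a Z f :=
  iSup_mono fun e => sInf_image_setOf_eq_zero_mono fun s => iSup_mono fun N =>
    wBowenWN_le_lamBowenN s e.1 N

theorem PBowen_le_PWBowen [CompactSpace (X 0)] [OpensMeasurableSpace (X 0)]
    (hT : ∀ i, Continuous (T i)) (hτc : ∀ i, Continuous (τ i)) (hτ0 : τ 0 = id)
    (ha : 0 < a 0) (hf : Continuous f) :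
    PBowen (T 0) T τ a Z f ≤ PWBowen (T 0) T τ a Z f := by
  refine iSup_le fun ⟨e, he⟩ => EReal.le_of_forall_lt_iff_le.1 fun z hz => ?_
  obtain ⟨q, hq, hqz⟩ := EReal.exists_between_coe_real hz
  replace hqz : q < z := EReal.coe_lt_coe_iff.1 hqz
  obtain ⟨ρ, hρ, hfρ⟩ := Metric.uniformContinuous_iff.1
    (CompactSpace.uniformContinuous_of_continuous hf) ((z - q) / 2) (by linarith)
  obtain ⟨ε, hε, heε, hρε⟩ : ∃ ε > 0, 2 * ε ≤ e ∧ 2 * ε ≤ ρ :=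
    ⟨min e ρ / 2, by positivity, by linarith [min_le_left e ρ], by linarith [min_le_right e ρ]⟩
  have hw : ∀ x y, dist x y < 2 * ε → |f x - f y| ≤ (z - q) / 2 := fun x y h => by
    rw [← Real.dist_eq]
    exact (hfρ (h.trans_le hρε)).le
  obtain ⟨C, -, hΛ⟩ := lamBowenN_le_mul_wBowenWN (Z := Z) hT hτc hτ0 ha
    (isCompact_range hf).bddAbove hε heε (by linarith) hw
    (δ := z - q) (by linarith)
  obtain ⟨_, ⟨s, hs, rfl⟩, hsq⟩ := sInf_lt_iff.1 ((le_iSup (fun ε : {ε : ℝ // 0 < ε} =>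
    PWBowenEps (T 0) T τ a Z f ε.1) ⟨ε, hε⟩).trans_lt hq)
  have hΛ0 : lamBowen (T 0) T τ a f (s + (z - q)) e Z = 0 :=
    ENNReal.iSup_eq_zero.2 fun N => nonpos_iff_eq_zero.1 ((hΛ s N).trans_eq
      (by rw [ENNReal.iSup_eq_zero.1 hs N, mul_zero]))
  calc PBowenEps (T 0) T τ a Z f e ≤ ((s + (z - q) : ℝ) : EReal) := sInf_le ⟨_, hΛ0, rfl⟩
    _ ≤ z := EReal.coe_le_coe_iff.2 (by linarith [EReal.coe_lt_coe_iff.1 hsq])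

end Comparison

theorem average_weighted_pressure_eq_sup_local_general
    {k : ℕ} [NeZero k]
    (X : Fin k → Type) [∀ i, MetricSpace (X i)] [∀ i, CompactSpace (X i)]
    [∀ i, MeasurableSpace (X i)] [∀ i, BorelSpace (X i)]
    (T : ∀ i, X i → X i) (hT : ∀ i, Continuous (T i))
    (τ : ∀ i, X 0 → X i) (hτ0 : τ 0 = id)
    (hτc : ∀ i, Continuous (τ i))
    (hτe : ∀ i, τ i ∘ T 0 = T i ∘ τ i)
    (a : Fin k → ℝ) (ha1 : 0 < a 0)
    (Z : Set (X 0)) (f : X 0 → ℝ) (hf : Continuous f) :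
    (PWBowen (T 0) T τ a Z f
        = ⨆ 𝒰 : {𝒰 : ∀ i, Set (Set (X i)) // ∀ i, IsOpenCover (𝒰 i)},
            PWLoc (T 0) a (fun i => pullCov (τ i) (𝒰.1 i)) Z f)
    ∧ (∀ 𝒰s : ℕ → ∀ i, Set (Set (X i)),
        (∀ n i, IsOpenCover (𝒰s n i)) →
        (∀ ε : ℝ, 0 < ε → ∃ N : ℕ, ∀ n ≥ N, ∀ i, ∀ U ∈ 𝒰s n i, Metric.diam U < ε) →
        Filter.Tendsto (fun n => PWLoc (T 0) a (fun i => pullCov (τ i) (𝒰s n i)) Z f)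
          Filter.atTop (nhds (PWBowen (T 0) T τ a Z f)))
    ∧ PWBowen (T 0) T τ a Z f = PBowen (T 0) T τ a Z f := by
  have hsc : ∀ i, Function.Semiconj (τ i) (T 0) (T i) :=
    fun i => Function.semiconj_iff_comp_eq.2 (hτe i)
  refine ⟨le_antisymm ?_ (iSup_le fun 𝒰 => PWLoc_le_PWBowen hsc 𝒰.2), fun 𝒰s h𝒰s hdiam => ?_,
    le_antisymm PWBowen_le_PBowen (PBowen_le_PWBowen hT hτc hτ0 ha1 hf)⟩
  · refine iSup_le fun ⟨e, he⟩ => ?_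
    choose 𝒰 h𝒰 hdiam using fun i => exists_isOpenCover_diam_lt (Y := X i) he
    exact (PWBowenEps_le_PWLoc hsc hdiam).trans (le_iSup_of_le ⟨𝒰, h𝒰⟩ le_rfl)
  · refine tendsto_order.2 ⟨fun c hc => ?_, fun c hc =>
      Eventually.of_forall fun n => (PWLoc_le_PWBowen hsc (h𝒰s n)).trans_lt hc⟩
    obtain ⟨⟨e, he⟩, hce⟩ := lt_iSup_iff.1 hc
    obtain ⟨N, hN⟩ := hdiam e he
    exact eventually_atTop.2 ⟨N, fun n hn => hce.trans_le (PWBowenEps_le_PWLoc hsc (hN n hn))⟩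

/-- The average 𝐚-weighted topological pressure of any subset `Z` equals both
the supremum over all tuples of open covers of the local average 𝐚-weighted pressures and
the limit of the local average 𝐚-weighted pressures as the maximal diameter of the covers
tends to `0`; moreover all these quantities equal the 𝐚-weighted topological pressure. -/
theorem average_weighted_pressure_eq_sup_local
    {k : ℕ} [NeZero k]
    (X : Fin k → Type) [∀ i, MetricSpace (X i)] [∀ i, CompactSpace (X i)]
    [∀ i, MeasurableSpace (X i)] [∀ i, BorelSpace (X i)]
    (T : ∀ i, X i → X i) (hT : ∀ i, Continuous (T i))
    (τ : ∀ i, X 0 → X i) (hτ0 : τ 0 = id)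
    (hτc : ∀ i, Continuous (τ i)) (hτs : ∀ i, Function.Surjective (τ i))
    (hτe : ∀ i, τ i ∘ T 0 = T i ∘ τ i)
    (hchain : ∀ i j : Fin k, i ≤ j → ∃ p : X i → X j,
        Continuous p ∧ p ∘ T i = T j ∘ p ∧ p ∘ τ i = τ j)
    (a : Fin k → ℝ) (ha1 : 0 < a 0) (ha : ∀ i, 0 ≤ a i)
    (Z : Set (X 0)) (f : X 0 → ℝ) (hf : Continuous f) :
    (PWBowen (T 0) T τ a Z f
        = ⨆ 𝒰 : {𝒰 : ∀ i, Set (Set (X i)) // ∀ i, IsOpenCover (𝒰 i)},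
            PWLoc (T 0) a (fun i => pullCov (τ i) (𝒰.1 i)) Z f)
    ∧ (∀ 𝒰s : ℕ → ∀ i, Set (Set (X i)),
        (∀ n i, IsOpenCover (𝒰s n i)) →
        (∀ ε : ℝ, 0 < ε → ∃ N : ℕ, ∀ n ≥ N, ∀ i, ∀ U ∈ 𝒰s n i, Metric.diam U < ε) →
        Filter.Tendsto (fun n => PWLoc (T 0) a (fun i => pullCov (τ i) (𝒰s n i)) Z f)
          Filter.atTop (nhds (PWBowen (T 0) T τ a Z f)))
    ∧ PWBowen (T 0) T τ a Z f = PBowen (T 0) T τ a Z f :=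
  average_weighted_pressure_eq_sup_local_general X T hT τ hτ0 hτc hτe a ha1 Z f hf

end WTP
end

section
/- Let M ∈ ℕ, Z ⊆ X_1, f ∈ C(X_1,ℝ), and let U_i be open covers of X_i for i=1,…,k. Then P_W^a(T_1, Z, {U_i}_{i=1}^k, f) = (1/M) · P_W^a(T_1^M, Z, {(U_i)_0^{M−1}}_{i=1}^k, S_M f), where on the right-hand side the local average a-weighted pressure is computed for the tower of systems (X_i, T_i^M) with the same factor maps τ_i, with open covers (U_i)_0^{M−1}=⋁_{l=0}^{M−1}T_i^{−l}U_i, and with potential S_M f = Σ_{l=0}^{M−1} f∘T_1^l. -/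
open MeasureTheory Set Filter Topology
open scoped ENNReal symmDiff

namespace WTP

variable {k : ℕ}

/-! The set `{s | W^{𝐚,s}(Z, f) = 0}` for `T` is mapped onto the corresponding set for
`(T^M, S_M f)` by `s ↦ M s`, because admissible families `{(n_j, A_j, c_j)}` can be carried over
in both directions at the price of a constant factor. A family for `T^M` is a family for `T` with
times `M n_j`, and a family for `T` becomes one for `T^M` with times `n_j / M + 1` once each `A_j`
is refined along the boundedly many extra orbit steps. In both cases `S_{⌈a₁ n⌉}` of `S_M f` under
`T^M` is `S_{M ⌈a₁ n⌉} f`, which differs from the Birkhoff sum of `f` used for `T` by `O(M ‖f‖_∞)`.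
Taking infima, `P_W` scales by `M`. -/

section Birkhoff

variable {X : Type*}

lemma birk_add (T : X → X) (f : X → ℝ) (p q : ℕ) (x : X) :
    birk T f (p + q) x = birk T f p x + birk T f q (T^[p] x) := by
  rw [birk, birk, birk, Finset.sum_range_add]
  congr 1
  exact Finset.sum_congr rfl fun l _ => by rw [add_comm, Function.iterate_add_apply]

lemma birk_iterate (T : X → X) (f : X → ℝ) (M q : ℕ) (x : X) :
    birk (T^[M]) (birk T f M) q x = birk T f (M * q) x := by
  induction q with
  | zero => simp [birk]
  | succ q ih =>
    rw [Nat.mul_succ, birk_add T f, ← ih, Function.iterate_mul]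
    simp only [birk, Finset.sum_range_succ]

variable {T : X → X} {f : X → ℝ} {B : ℝ}

lemma abs_birk_le (hB : ∀ x, |f x| ≤ B) (n : ℕ) (x : X) : |birk T f n x| ≤ n * B :=
  calc |birk T f n x| ≤ ∑ l ∈ Finset.range n, |f (T^[l] x)| := Finset.abs_sum_le_sum_abs _ _
    _ ≤ ∑ _l ∈ Finset.range n, B := Finset.sum_le_sum fun l _ => hB _
    _ = n * B := by simp

lemma abs_birk_sub_birk_le (hB : ∀ x, |f x| ≤ B) (q q' : ℕ) (x : X) :
    |birk T f q x - birk T f q' x| ≤ |(q : ℝ) - q'| * B := by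
  wlog h : q' ≤ q generalizing q q'
  · rw [abs_sub_comm, abs_sub_comm (q : ℝ)]
    exact this q' q (le_of_not_ge h)
  obtain ⟨d, rfl⟩ := Nat.exists_eq_add_of_le h
  rw [birk_add, add_sub_cancel_left, Nat.cast_add, add_sub_cancel_left, Nat.abs_cast]
  exact abs_birk_le hB d _

lemma sSup_image_birk_le (hB : ∀ x, |f x| ≤ B) (hB0 : 0 ≤ B) {A' A : Set X} (hsub : A' ⊆ A)
    (hne : A'.Nonempty ∨ A = ∅) (q q' : ℕ) :
    sSup (birk T f q '' A') ≤ sSup (birk T f q' '' A) + |(q : ℝ) - q'| * B := by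
  rcases hne with hne | rfl
  · refine csSup_le (hne.image _) ?_
    rintro _ ⟨x, hx, rfl⟩
    have hbdd : BddAbove (birk T f q' '' A) :=
      ⟨q' * B, by rintro _ ⟨y, -, rfl⟩; exact (abs_le.mp (abs_birk_le hB q' y)).2⟩
    have := le_csSup hbdd (mem_image_of_mem _ (hsub hx))
    linarith [(abs_le.mp (abs_birk_sub_birk_le (T := T) hB q q' x)).2]
  · simp only [subset_empty_iff.mp hsub, image_empty, Real.sSup_empty, zero_add]
    exact mul_nonneg (abs_nonneg _) hB0

end Birkhoff

/-- The summand `pterm` with the time `t` and the length `q` of the Birkhoff sum decoupled, so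
that the summands for `T` and for `T^M` can be compared. -/
noncomputable def expSupBirk {X : Type*} (T : X → X) (f : X → ℝ) (a1 s t : ℝ) (q : ℕ)
    (A : Set X) : ℝ≥0∞ :=
  ENNReal.ofReal (Real.exp (-(s * t) + (1 / a1) * sSup (birk T f q '' A)))

section ExpSupBirk

variable {X : Type*} {T : X → X} {f : X → ℝ} {B : ℝ}

lemma pterm_eq_expSupBirk (a1 s : ℝ) (n : ℕ) (A : Set X) :
    pterm T f a1 s n A = expSupBirk T f a1 s n ⌈a1 * n⌉₊ A := rfl

lemma pterm_iterate_eq_expSupBirk (M : ℕ) (a1 s : ℝ) (m : ℕ) (A : Set X) :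
    pterm (T^[M]) (birk T f M) a1 (M * s) m A =
      expSupBirk T f a1 s (M * m) (M * ⌈a1 * m⌉₊) A := by
  rw [pterm, expSupBirk, funext (birk_iterate T f M _), mul_comm (M : ℝ) s, mul_assoc]

lemma expSupBirk_le {a1 : ℝ} (ha1 : 0 < a1) (hB : ∀ x, |f x| ≤ B) (hB0 : 0 ≤ B)
    {A' A : Set X} (hsub : A' ⊆ A) (hne : A'.Nonempty ∨ A = ∅) (s : ℝ) {t t' Δt Δq : ℝ}
    {q q' : ℕ} (ht : |t - t'| ≤ Δt) (hq : |(q : ℝ) - q'| ≤ Δq) :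
    expSupBirk T f a1 s t q A' ≤
      ENNReal.ofReal (Real.exp (|s| * Δt + Δq * B / a1)) * expSupBirk T f a1 s t' q' A := by
  rw [expSupBirk, expSupBirk, ← ENNReal.ofReal_mul (Real.exp_pos _).le, ← Real.exp_add]
  refine ENNReal.ofReal_le_ofReal (Real.exp_le_exp.mpr ?_)
  have hs : s * t' - s * t ≤ |s| * Δt :=
    calc s * t' - s * t = -(s * (t - t')) := by ring
      _ ≤ |s * (t - t')| := neg_le_abs _
      _ ≤ |s| * Δt := by rw [abs_mul]; gcongr
  have hsup := sSup_image_birk_le (T := T) hB hB0 hsub hne q q'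
  have hqB : |(q : ℝ) - q'| * B ≤ Δq * B := mul_le_mul_of_nonneg_right hq hB0
  have : (1 / a1) * sSup (birk T f q '' A') ≤
      (1 / a1) * sSup (birk T f q' '' A) + Δq * B / a1 :=
    calc _ ≤ (1 / a1) * (sSup (birk T f q' '' A) + Δq * B) := by gcongr; linarith
      _ = _ := by ring
  linarith

end ExpSupBirk

section Ceil

variable {c m n M : ℝ}

lemma ceil_le_mul_ceil_add_one (hc : 0 ≤ c) (hn : 0 ≤ n) (hM : 0 ≤ M) (h : n ≤ M * m) :
    (⌈c * n⌉₊ : ℝ) ≤ M * ⌈c * m⌉₊ + 1 := by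
  have h1 : (⌈c * n⌉₊ : ℝ) < c * n + 1 := Nat.ceil_lt_add_one (mul_nonneg hc hn)
  have h2 : M * (c * m) ≤ M * ⌈c * m⌉₊ := mul_le_mul_of_nonneg_left (Nat.le_ceil _) hM
  nlinarith

lemma mul_ceil_le_ceil_add (hc : 0 ≤ c) (hm : 0 ≤ m) (hM : 0 ≤ M) (h : M * m ≤ n + M) :
    M * ⌈c * m⌉₊ ≤ (⌈c * n⌉₊ : ℝ) + (c + 1) * M := by
  have h1 : M * ⌈c * m⌉₊ ≤ M * (c * m + 1) :=
    mul_le_mul_of_nonneg_left (Nat.ceil_lt_add_one (mul_nonneg hc hm)).le hM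
  have h2 : c * n ≤ ⌈c * n⌉₊ := Nat.le_ceil _
  nlinarith

lemma abs_mul_ceil_sub_ceil_le (hc : 0 ≤ c) (hm : 0 ≤ m) (hn : 0 ≤ n) (hM : 1 ≤ M)
    (h₁ : n ≤ M * m) (h₂ : M * m ≤ n + M) :
    |M * ⌈c * m⌉₊ - ⌈c * n⌉₊| ≤ (c + 1) * M := by
  have := ceil_le_mul_ceil_add_one hc hn (by linarith) h₁
  have := mul_ceil_le_ceil_add hc hm (by linarith) h₂
  rw [abs_le]
  constructor <;> nlinarith

end Ceil

lemma ceil_mul_natCast_mul_le (c : ℝ) (M n : ℕ) : ⌈c * ((M * n : ℕ) : ℝ)⌉₊ ≤ M * ⌈c * n⌉₊ := by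
  rw [Nat.ceil_le]
  push_cast
  calc c * (M * n) = M * (c * n) := by ring
    _ ≤ M * ⌈c * n⌉₊ := mul_le_mul_of_nonneg_left (Nat.le_ceil _) (Nat.cast_nonneg _)

lemma natCast_le_mul_div_add_one {M : ℕ} (hM : 0 < M) (n : ℕ) :
    (n : ℝ) ≤ M * ((n / M + 1 : ℕ) : ℝ) ∧ (M : ℝ) * ((n / M + 1 : ℕ) : ℝ) ≤ n + M := by
  have h₁ := (Nat.lt_mul_div_succ n hM).le
  have h₂ : M * (n / M + 1) ≤ n + M := by
    have := Nat.mul_div_le n M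
    rw [mul_add, mul_one]
    omega
  exact ⟨by exact_mod_cast h₁, by exact_mod_cast h₂⟩

lemma mul_ceil_div_add_one_le {c : ℝ} (hc : 0 ≤ c) {M : ℕ} (hM : 0 < M) (n : ℕ) :
    M * ⌈c * ((n / M + 1 : ℕ) : ℝ)⌉₊ ≤ ⌈c * n⌉₊ + M * (⌈c⌉₊ + 1) := by
  have h := mul_ceil_le_ceil_add hc (Nat.cast_nonneg _) (Nat.cast_nonneg _)
    (natCast_le_mul_div_add_one hM n).2
  have : (c + 1) * M ≤ M * ((⌈c⌉₊ : ℝ) + 1) := by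
    nlinarith [Nat.le_ceil c, (Nat.cast_nonneg M : (0 : ℝ) ≤ M)]
  have : (M : ℝ) * ⌈c * ((n / M + 1 : ℕ) : ℝ)⌉₊ ≤ ⌈c * n⌉₊ + M * ((⌈c⌉₊ : ℝ) + 1) := by
    linarith
  exact_mod_cast this

section MultiJoin

variable {k : ℕ} {X : Type*}

/-- `jointFiber T a 𝒱 n` is definitionally `multiJoin T 𝒱 (fun i => ⌈cw a i * n⌉₊)`. -/
def multiJoin (T : X → X) (𝒱 : Fin k → Set (Set X)) (L : Fin k → ℕ) : Set (Set X) :=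
  {A | ∃ V : Fin k → ℕ → Set X, (∀ i, ∀ l < L i, V i l ∈ 𝒱 i) ∧
      A = ⋂ i, ⋂ l ∈ Finset.range (L i), T^[l] ⁻¹' V i l}

def tailRefine (T : X → X) (𝒱 : Fin k → Set (Set X)) (L G : Fin k → ℕ) (A : Set X)
    (σ : ∀ i, Fin (G i) → 𝒱 i) : Set X :=
  A ∩ ⋂ i, ⋂ t : Fin (G i), T^[L i + t] ⁻¹' σ i t

variable {T : X → X} {𝒱 : Fin k → Set (Set X)}

lemma exists_multiJoin_superset_tailRefine {L L' G : Fin k → ℕ} (hL : ∀ i, L' i ≤ L i + G i)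
    {A : Set X} (hA : A ∈ multiJoin T 𝒱 L) (σ : ∀ i, Fin (G i) → 𝒱 i) :
    ∃ B ∈ multiJoin T 𝒱 L', tailRefine T 𝒱 L G A σ ⊆ B := by
  classical
  obtain ⟨V, hV, rfl⟩ := hA
  let W : Fin k → ℕ → Set X := fun i j =>
    if j < L i then V i j else if ht : j - L i < G i then σ i ⟨j - L i, ht⟩ else ∅
  refine ⟨_, ⟨W, fun i j hj => ?_, rfl⟩, fun x hx => ?_⟩
  · dsimp only [W]
    split_ifs with h₁ h₂
    · exact hV i j h₁
    · exact (σ i _).2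
    · have := hL i; omega
  · simp only [tailRefine, mem_inter_iff, mem_iInter, Finset.mem_range, mem_preimage] at hx ⊢
    intro i j hj
    dsimp only [W]
    split_ifs with h₁ h₂
    · exact hx.1 i j h₁
    · simpa [Nat.add_sub_cancel' (not_lt.mp h₁)] using hx.2 i ⟨j - L i, h₂⟩
    · have := hL i; omega

lemma exists_multiJoin_superset_of_le {L L' : Fin k → ℕ} (hL : ∀ i, L' i ≤ L i) {A : Set X}
    (hA : A ∈ multiJoin T 𝒱 L) : ∃ B ∈ multiJoin T 𝒱 L', A ⊆ B := by
  obtain ⟨B, hB, hAB⟩ := exists_multiJoin_superset_tailRefine (G := fun _ => 0) hL hA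
    (fun _ t => t.elim0)
  exact ⟨B, hB, fun x hx => hAB ⟨hx, by simp⟩⟩

lemma exists_mem_tailRefine (h𝒱 : ∀ i, ⋃₀ 𝒱 i = univ) (L G : Fin k → ℕ) {A : Set X} {z : X}
    (hz : z ∈ A) : ∃ σ, z ∈ tailRefine T 𝒱 L G A σ := by
  have hcov i t := sUnion_eq_univ_iff.mp (h𝒱 i) (T^[L i + t] z)
  choose V hV hzV using hcov
  exact ⟨fun i t => ⟨V i t, hV i t⟩, hz, mem_iInter₂.mpr fun i t => hzV i (t : ℕ)⟩

lemma measurableSet_tailRefine [MeasurableSpace X] (hT : Measurable T)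
    (h𝒱 : ∀ i, ∀ V ∈ 𝒱 i, MeasurableSet V)
    {L G : Fin k → ℕ} {A : Set X} (hA : MeasurableSet A) (σ : ∀ i, Fin (G i) → 𝒱 i) :
    MeasurableSet (tailRefine T 𝒱 L G A σ) :=
  hA.inter (.iInter fun i => .iInter fun t => (hT.iterate _) (h𝒱 i _ (σ i t).2))

lemma iInter_range_mul_preimage_iterate (W : ℕ → Set X) (M L : ℕ) :
    ⋂ j ∈ Finset.range (M * L), T^[j] ⁻¹' W j =
      ⋂ l ∈ Finset.range L, (T^[M])^[l] ⁻¹' ⋂ r ∈ Finset.range M, T^[r] ⁻¹' W (M * l + r) := by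
  ext x
  simp only [mem_iInter, Finset.mem_range, mem_preimage, ← Function.iterate_mul,
    ← Function.iterate_add_apply]
  constructor
  · intro h l hl r hr
    rw [add_comm]
    exact h _ (by nlinarith)
  · intro h j hj
    have hM : 0 < M := Nat.pos_of_mul_pos_right (Nat.zero_lt_of_lt hj)
    simpa only [add_comm _ (M * (j / M)), Nat.div_add_mod] using
      h (j / M) (Nat.div_lt_of_lt_mul hj) (j % M) (Nat.mod_lt j hM)

lemma jointFiber_iterate_covJoinT (a : Fin k → ℝ) (M n : ℕ) :
    jointFiber (T^[M]) a (fun i => covJoinT T (𝒱 i) M) n =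
      multiJoin T 𝒱 (fun i => M * ⌈cw a i * n⌉₊) := by
  ext A
  constructor
  · rintro ⟨V, hV, rfl⟩
    have hu i l : ∃ u : ℕ → Set X, l < ⌈cw a i * n⌉₊ →
        (∀ r < M, u r ∈ 𝒱 i) ∧ V i l = ⋂ r ∈ Finset.range M, T^[r] ⁻¹' u r := by
      by_cases hl : l < ⌈cw a i * n⌉₊
      · obtain ⟨u, hu, hVu⟩ := hV i l hl
        exact ⟨u, fun _ => ⟨hu, hVu⟩⟩
      · exact ⟨fun _ => ∅, fun h => absurd h hl⟩
    choose u hu using hu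
    refine ⟨fun i j => u i (j / M) (j % M), fun i j hj => ?_, ?_⟩
    · have hM : 0 < M := Nat.pos_of_mul_pos_right (Nat.zero_lt_of_lt hj)
      exact (hu i _ (Nat.div_lt_of_lt_mul hj)).1 _ (Nat.mod_lt j hM)
    · refine iInter_congr fun i => ?_
      rw [iInter_range_mul_preimage_iterate]
      refine iInter₂_congr fun l hl => ?_
      rw [(hu i l (Finset.mem_range.mp hl)).2]
      congr! 4 with r hr
      have hM : 0 < M := Nat.zero_lt_of_lt (Finset.mem_range.mp hr)
      dsimp only
      rw [Nat.mul_add_div hM, Nat.div_eq_of_lt (Finset.mem_range.mp hr), add_zero,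
        Nat.mul_add_mod, Nat.mod_eq_of_lt (Finset.mem_range.mp hr)]
  · rintro ⟨W, hW, rfl⟩
    refine ⟨fun i l => ⋂ r ∈ Finset.range M, T^[r] ⁻¹' W i (M * l + r),
      fun i l hl => ⟨fun r => W i (M * l + r), fun r hr => hW i _ (by nlinarith), rfl⟩, ?_⟩
    exact iInter_congr fun i => iInter_range_mul_preimage_iterate _ M _

end MultiJoin

lemma IsOpenCover.pullCov {X Y : Type*} [TopologicalSpace X] [TopologicalSpace Y]
    {𝒰 : Set (Set Y)} (h : IsOpenCover 𝒰) {g : X → Y} (hg : Continuous g) :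
    IsOpenCover (pullCov g 𝒰) := by
  refine ⟨h.1.image _, ?_, ?_⟩
  · rintro _ ⟨U, hU, rfl⟩
    exact (h.2.1 U hU).preimage hg
  · rw [WTP.pullCov, sUnion_image, ← preimage_iUnion₂, ← sUnion_eq_biUnion, h.2.2, preimage_univ]

lemma pullCov_covJoinT {X Y : Type*} {τ : X → Y} {T : X → X} {S : Y → Y}
    (h : Function.Semiconj τ T S) (𝒰 : Set (Set Y)) (M : ℕ) :
    pullCov τ (covJoinT S 𝒰 M) = covJoinT T (pullCov τ 𝒰) M := by
  have hpre (l : ℕ) (U : Set Y) : T^[l] ⁻¹' (τ ⁻¹' U) = τ ⁻¹' (S^[l] ⁻¹' U) := by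
    rw [← preimage_comp, ← preimage_comp, (h.iterate_right l).comp_eq]
  ext A
  constructor
  · rintro ⟨_, ⟨u, hu, rfl⟩, rfl⟩
    refine ⟨fun l => τ ⁻¹' u l, fun l hl => ⟨u l, hu l hl, rfl⟩, ?_⟩
    simp only [preimage_iInter, hpre]
  · rintro ⟨V, hV, rfl⟩
    have hu l : ∃ U : Set Y, l < M → U ∈ 𝒰 ∧ τ ⁻¹' U = V l := by
      by_cases hl : l < M
      · obtain ⟨U, hU, hVU⟩ := hV l hl
        exact ⟨U, fun _ => ⟨hU, hVU⟩⟩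
      · exact ⟨∅, fun h => absurd h hl⟩
    choose u hu using hu
    refine ⟨_, ⟨u, fun l hl => (hu l hl).1, rfl⟩, ?_⟩
    simp only [preimage_iInter, ← hpre]
    exact iInter₂_congr fun l hl => by rw [(hu l (Finset.mem_range.mp hl)).2]

lemma tsum_range_fiberSum {ι κ : Type*} (key : ι → κ) (c : ι → ℝ≥0∞) (h : κ → ℝ≥0∞) :
    ∑' k : range key, (∑' j : key ⁻¹' {(k : κ)}, c j) * h k = ∑' j, c j * h (key j) := by
  rw [tsum_subtype_eq_of_support_subset (f := fun k => (∑' j : key ⁻¹' {k}, c j) * h k),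
    ← ENNReal.tsum_fiberwise _ key]
  · refine tsum_congr fun k => ?_
    rw [← ENNReal.tsum_mul_right]
    exact tsum_congr fun j => by rw [mem_singleton_iff.mp j.2]
  · intro k hk
    by_contra hkey
    have : key ⁻¹' {k} = ∅ := eq_empty_of_forall_notMem fun j hj => hkey ⟨j, hj⟩
    simp [this] at hk

lemma eq_zero_of_forall_le_mul_of_iInf_eq_zero {ι : Type*} {P : ι → Prop} {c : ι → ℝ≥0∞}
    {L C : ℝ≥0∞} (hC : C ≠ ⊤) (h : ∀ i, P i → L ≤ C * c i) (h0 : ⨅ i, ⨅ (_ : P i), c i = 0) :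
    L = 0 := by
  obtain ⟨i₀, hi₀⟩ : ∃ i, P i := by
    by_contra! hP
    simp [hP] at h0
  rw [iInf_subtype'] at h0
  have : Nonempty {i // P i} := ⟨⟨i₀, hi₀⟩⟩
  have hmul := ENNReal.mul_iInf (a := C) (f := fun i : {i // P i} => c i) (by simp [hC])
  rw [h0, mul_zero] at hmul
  exact le_antisymm (hmul ▸ le_iInf fun i => h i i.2) zero_le

lemma pterm_ne_zero {X : Type*} (T : X → X) (f : X → ℝ) (a1 s : ℝ) (n : ℕ) (A : Set X) :
    pterm T f a1 s n A ≠ 0 :=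
  (ENNReal.ofReal_pos.mpr (Real.exp_pos _)).ne'

section WCover

variable {k : ℕ} {X : Type*} [MeasurableSpace X]

/-- Admissible families for `wLocN`, but indexed rather than given as sets of triples, so that
repeated triples are allowed. -/
structure IsWCover (T : X → X) (a : Fin k → ℝ) (𝒱 : Fin k → Set (Set X)) (N : ℕ) (Z : Set X)
    {ι : Type*} (n : ι → ℕ) (A : ι → Set X) (c : ι → ℝ≥0∞) : Prop where
  le_length : ∀ j, N ≤ n j
  measurableSet : ∀ j, MeasurableSet (A j)
  pos : ∀ j, 0 < c j
  ne_top : ∀ j, c j ≠ ⊤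
  subset_jointFiber : ∀ j, ∃ B ∈ jointFiber T a 𝒱 (n j), A j ⊆ B
  cover : ∀ z ∈ Z, 1 ≤ ∑' j, (A j).indicator (fun _ => c j) z

variable [NeZero k] {T : X → X} {a : Fin k → ℝ} {𝒱 : Fin k → Set (Set X)} {f : X → ℝ} {s : ℝ}
  {N : ℕ} {Z : Set X}

/-- Repeated pairs `(n_j, A_j)` are merged into one triple carrying the sum of their weights. -/
theorem wLocN_le_tsum {ι : Type*} [Countable ι] {n : ι → ℕ} {A : ι → Set X} {c : ι → ℝ≥0∞}
    (hW : IsWCover T a 𝒱 N Z n A c) :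
    wLocN T a 𝒱 f s N Z ≤ ∑' j, c j * pterm T f (a 0) s (n j) (A j) := by
  set key : ι → ℕ × Set X := fun j => (n j, A j)
  set w : ℕ × Set X → ℝ≥0∞ := fun k => ∑' j : key ⁻¹' {k}, c j
  set D := (fun k : ℕ × Set X => (k.1, k.2, w k)) '' range key
  have hinj : InjOn (fun k : ℕ × Set X => (k.1, k.2, w k)) (range key) :=
    fun k _ k' _ h => by
      simp only [Prod.mk.injEq] at h
      exact Prod.ext h.1 h.2.1
  have hsum (h : ℕ × Set X → ℝ≥0∞) :
      ∑' q : D, q.1.2.2 * h (q.1.1, q.1.2.1) = ∑' j, c j * h (key j) := by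
    exact (tsum_image (fun q => q.2.2 * h (q.1, q.2.1)) hinj).trans (tsum_range_fiberSum key c h)
  by_cases htop : ∑' j, c j * pterm T f (a 0) s (n j) (A j) = ⊤
  · simp [htop]
  have hw_ne_top j : w (key j) ≠ ⊤ := by
    have : w (key j) * pterm T f (a 0) s (n j) (A j) ≠ ⊤ := by
      refine ne_top_of_le_ne_top htop ?_
      rw [← hsum fun k => pterm T f (a 0) s k.1 k.2]
      exact ENNReal.le_tsum (⟨_, key j, ⟨j, rfl⟩, rfl⟩ : D)
    exact (ENNReal.lt_top_of_mul_ne_top_left this (pterm_ne_zero _ _ _ _ _ _)).ne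
  unfold wLocN
  refine ((iInf₂_le D ((countable_range key).image _)).trans (iInf₂_le ?_ ?_)).trans
    (hsum fun k => pterm T f (a 0) s k.1 k.2).le
  · rintro _ ⟨_, ⟨j, rfl⟩, rfl⟩
    exact ⟨hW.le_length j, hW.measurableSet j,
      (hW.pos j).trans_le (ENNReal.le_tsum (⟨j, rfl⟩ : key ⁻¹' {key j})), hw_ne_top j,
      hW.subset_jointFiber j⟩
  · intro z hz
    have hind (E : Set X) (b : ℝ≥0∞) : E.indicator (fun _ => b) z = b * E.indicator 1 z := by
      by_cases hzE : z ∈ E <;> simp [hzE]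
    calc 1 ≤ _ := hW.cover z hz
      _ = ∑' j, c j * (key j).2.indicator 1 z := tsum_congr fun j => hind _ _
      _ = ∑' q : D, q.1.2.2 * q.1.2.1.indicator 1 z := (hsum fun k => k.2.indicator 1 z).symm
      _ = _ := tsum_congr fun q => (hind _ _).symm

lemma eq_zero_of_forall_le_mul_of_wLocN_eq_zero {L C : ℝ≥0∞} (hC : C ≠ ⊤)
    (h : ∀ D : Set (ℕ × Set X × ℝ≥0∞), D.Countable →
      IsWCover T a 𝒱 N Z (fun p : D => p.1.1) (fun p => p.1.2.1) (fun p => p.1.2.2) →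
      L ≤ C * ∑' p : D, p.1.2.2 * pterm T f (a 0) s p.1.1 p.1.2.1)
    (h0 : wLocN T a 𝒱 f s N Z = 0) : L = 0 := by
  refine eq_zero_of_forall_le_mul_of_iInf_eq_zero
    (P := fun D : Set (ℕ × Set X × ℝ≥0∞) => D.Countable ∧
      IsWCover T a 𝒱 N Z (fun p : D => p.1.1) (fun p => p.1.2.1) (fun p => p.1.2.2))
    hC (fun D hD => h D hD.1 hD.2) (le_antisymm ?_ zero_le)
  rw [← h0, wLocN]
  refine iInf_mono fun D => le_iInf fun hD => le_iInf fun hadm => le_iInf fun hcov =>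
    iInf_le_of_le ⟨hD, ?_⟩ le_rfl
  exact ⟨fun p => (hadm p p.2).1, fun p => (hadm p p.2).2.1, fun p => (hadm p p.2).2.2.1,
    fun p => (hadm p p.2).2.2.2.1, fun p => (hadm p p.2).2.2.2.2, hcov⟩

end WCover

lemma EReal.sInf_coe_image_mul {c : ℝ} (hc : 0 < c) (S : Set ℝ) :
    sInf (Real.toEReal '' ((c * ·) '' S)) = c * sInf (Real.toEReal '' S) := by
  have hmono (d : ℝ) (hd : 0 ≤ d) : Monotone fun x : EReal => (d : EReal) * x :=
    fun x y hxy => mul_le_mul_of_nonneg_left hxy (by exact_mod_cast hd)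
  have hcancel (d : ℝ) (hd : d ≠ 0) (x : EReal) : ((d⁻¹ : ℝ) : EReal) * (d * x) = x := by
    rw [← mul_assoc, ← EReal.coe_mul, inv_mul_cancel₀ hd, EReal.coe_one, one_mul]
  let e : EReal ≃o EReal :=
    OrderIso.ofHomInv ⟨_, hmono c hc.le⟩ ⟨_, hmono c⁻¹ (inv_nonneg.2 hc.le)⟩
      (by ext x; have := hcancel c⁻¹ (inv_ne_zero hc.ne') x; rwa [inv_inv] at this)
      (by ext x; exact hcancel c hc.ne' x)
  calc sInf (Real.toEReal '' ((c * ·) '' S))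
      = sInf ((fun x : EReal => (c : EReal) * x) '' (Real.toEReal '' S)) := by
        simp only [image_image, EReal.coe_mul]
    _ = c * sInf (Real.toEReal '' S) := by
        rw [sInf_image]
        exact (e.map_sInf _).symm

section Iterate

variable {X : Type*} {T : X → X} {f : X → ℝ} {B a1 : ℝ}

lemma pterm_mul_le_mul_pterm_iterate (ha1 : 0 < a1) (hB : ∀ x, |f x| ≤ B) (hB0 : 0 ≤ B)
    {M : ℕ} (hM : 0 < M) (s : ℝ) (n : ℕ) (A : Set X) :
    pterm T f a1 s (M * n) A ≤ ENNReal.ofReal (Real.exp (|s| * M + (a1 + 1) * M * B / a1)) *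
      pterm (T^[M]) (birk T f M) a1 (M * s) n A := by
  have hM1 : (1 : ℝ) ≤ M := by exact_mod_cast hM
  rw [pterm_iterate_eq_expSupBirk, pterm_eq_expSupBirk]
  refine expSupBirk_le ha1 hB hB0 subset_rfl A.eq_empty_or_nonempty.symm s ?_ ?_
  · push_cast
    simp only [sub_self, abs_zero]
    positivity
  · rw [abs_sub_comm]
    push_cast
    exact abs_mul_ceil_sub_ceil_le ha1.le (by positivity) (by positivity) hM1 le_rfl
      (by linarith)

lemma pterm_iterate_le_mul_pterm (ha1 : 0 < a1) (hB : ∀ x, |f x| ≤ B) (hB0 : 0 ≤ B)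
    {M : ℕ} (hM : 0 < M) (s : ℝ) (n : ℕ) {A' A : Set X} (hsub : A' ⊆ A) (hne : A'.Nonempty) :
    pterm (T^[M]) (birk T f M) a1 (M * s) (n / M + 1) A' ≤
      ENNReal.ofReal (Real.exp (|s| * M + (a1 + 1) * M * B / a1)) * pterm T f a1 s n A := by
  have hM1 : (1 : ℝ) ≤ M := by exact_mod_cast hM
  obtain ⟨h₁, h₂⟩ := natCast_le_mul_div_add_one hM n
  rw [pterm_iterate_eq_expSupBirk, pterm_eq_expSupBirk]
  refine expSupBirk_le ha1 hB hB0 hsub (Or.inl hne) s ?_ ?_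
  · rw [abs_le]
    constructor <;> linarith
  · rw [Nat.cast_mul]
    exact abs_mul_ceil_sub_ceil_le ha1.le (Nat.cast_nonneg _) (Nat.cast_nonneg _) hM1 h₁ h₂

variable [MeasurableSpace X] {k : ℕ} {a : Fin k → ℝ} {𝒱 : Fin k → Set (Set X)} {N M : ℕ}
  {Z : Set X}

/-- By `hG`, the `n_j / M + 1` blocks of length `M` overshoot the `⌈(a₁+…+aᵢ) n_j⌉` steps
controlled by `A_j` by at most `G i` steps; `A_j` is refined along those. -/
lemma IsWCover.tailRefine_iterate (hT : Measurable T)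
    (h𝒱m : ∀ i, ∀ V ∈ 𝒱 i, MeasurableSet V) (h𝒱c : ∀ i, ⋃₀ 𝒱 i = univ) (hM : 0 < M)
    (G : Fin k → ℕ) (hG : ∀ i (m : ℕ), M * ⌈cw a i * ((m / M + 1 : ℕ) : ℝ)⌉₊ ≤ ⌈cw a i * m⌉₊ + G i)
    {ι : Type*} {n : ι → ℕ} {A : ι → Set X} {c : ι → ℝ≥0∞}
    (hW : IsWCover T a 𝒱 (M * N) Z n A c) :
    IsWCover (T^[M]) a (fun i => covJoinT T (𝒱 i) M) N Z
      (fun p : {p : ι × (∀ i, Fin (G i) → 𝒱 i) |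
        (tailRefine T 𝒱 (fun i => ⌈cw a i * n p.1⌉₊) G (A p.1) p.2).Nonempty} =>
          n p.1.1 / M + 1)
      (fun p => tailRefine T 𝒱 (fun i => ⌈cw a i * n p.1.1⌉₊) G (A p.1.1) p.1.2)
      (fun p => c p.1.1) := by
  refine ⟨fun p => ?_, fun p => measurableSet_tailRefine hT h𝒱m (hW.measurableSet _) _,
    fun p => hW.pos _, fun p => hW.ne_top _, fun p => ?_, fun z hz => ?_⟩
  · have := hW.le_length p.1.1
    have : N ≤ n p.1.1 / M := (Nat.le_div_iff_mul_le hM).mpr (by linarith)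
    omega
  · obtain ⟨E, hE, hAE⟩ := hW.subset_jointFiber p.1.1
    obtain ⟨E', hE', hsub⟩ := exists_multiJoin_superset_tailRefine (hG · _) hE p.1.2
    rw [jointFiber_iterate_covJoinT]
    exact ⟨E', hE', (inter_subset_inter_left _ hAE).trans hsub⟩
  set piece : ι × (∀ i, Fin (G i) → 𝒱 i) → Set X :=
    fun p => tailRefine T 𝒱 (fun i => ⌈cw a i * n p.1⌉₊) G (A p.1) p.2
  calc 1 ≤ ∑' j, (A j).indicator (fun _ => c j) z := hW.cover z hz
    _ ≤ ∑' j, ∑' σ, (piece (j, σ)).indicator (fun _ => c j) z :=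
      ENNReal.tsum_le_tsum fun j => ?_
    _ = ∑' p, (piece p).indicator (fun _ => c p.1) z :=
      (ENNReal.tsum_prod' (f := fun p => (piece p).indicator (fun _ => c p.1) z)).symm
    _ = ∑' p : {p | (piece p).Nonempty}, (piece p).indicator (fun _ => c p.1.1) z :=
      (tsum_subtype_eq_of_support_subset fun p hp =>
        show (piece p).Nonempty from ⟨z, by_contra fun h => hp (indicator_of_notMem h _)⟩).symm
  by_cases hzA : z ∈ A j
  · obtain ⟨σ, hσ⟩ := exists_mem_tailRefine h𝒱c (fun i => ⌈cw a i * n j⌉₊) G hzA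
    rw [indicator_of_mem hzA]
    exact (indicator_of_mem hσ (fun _ => c j)).symm.le.trans (ENNReal.le_tsum σ)
  · rw [indicator_of_notMem hzA]
    exact zero_le

variable [NeZero k]

lemma wLocN_le_mul_tsum_of_isWCover_iterate (ha1 : 0 < a 0) (hB : ∀ x, |f x| ≤ B) (hB0 : 0 ≤ B)
    (hM : 0 < M) (s : ℝ) {ι : Type*} [Countable ι] {n : ι → ℕ} {A : ι → Set X} {c : ι → ℝ≥0∞}
    (hW : IsWCover (T^[M]) a (fun i => covJoinT T (𝒱 i) M) N Z n A c) :
    wLocN T a 𝒱 f s N Z ≤ ENNReal.ofReal (Real.exp (|s| * M + (a 0 + 1) * M * B / a 0)) *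
      ∑' j, c j * pterm (T^[M]) (birk T f M) (a 0) (M * s) (n j) (A j) := by
  have hW' : IsWCover T a 𝒱 N Z (fun j => M * n j) A c := by
    refine ⟨fun j => (hW.le_length j).trans (Nat.le_mul_of_pos_left _ hM), hW.measurableSet,
      hW.pos, hW.ne_top, fun j => ?_, hW.cover⟩
    obtain ⟨E, hE, hAE⟩ := hW.subset_jointFiber j
    rw [jointFiber_iterate_covJoinT] at hE
    obtain ⟨E', hE', hEE'⟩ :=
      exists_multiJoin_superset_of_le (fun i => ceil_mul_natCast_mul_le _ M (n j)) hE
    exact ⟨E', hE', hAE.trans hEE'⟩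
  calc wLocN T a 𝒱 f s N Z ≤ ∑' j, c j * pterm T f (a 0) s (M * n j) (A j) := wLocN_le_tsum hW'
    _ ≤ ∑' j, c j * (ENNReal.ofReal (Real.exp (|s| * M + (a 0 + 1) * M * B / a 0)) *
          pterm (T^[M]) (birk T f M) (a 0) (M * s) (n j) (A j)) :=
      ENNReal.tsum_le_tsum fun j =>
        mul_le_mul_right (pterm_mul_le_mul_pterm_iterate ha1 hB hB0 hM s _ _) _
    _ = _ := by
      rw [← ENNReal.tsum_mul_left]
      exact tsum_congr fun j => mul_left_comm _ _ _

lemma wLocN_iterate_le_mul_tsum_of_isWCover (hT : Measurable T) (h𝒱f : ∀ i, (𝒱 i).Finite)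
    (h𝒱m : ∀ i, ∀ V ∈ 𝒱 i, MeasurableSet V) (h𝒱c : ∀ i, ⋃₀ 𝒱 i = univ) (ha1 : 0 < a 0)
    (hB : ∀ x, |f x| ≤ B) (hB0 : 0 ≤ B) (hM : 0 < M) (G : Fin k → ℕ)
    (hG : ∀ i (m : ℕ), M * ⌈cw a i * ((m / M + 1 : ℕ) : ℝ)⌉₊ ≤ ⌈cw a i * m⌉₊ + G i)
    (s : ℝ) {ι : Type*} [Countable ι] {n : ι → ℕ} {A : ι → Set X} {c : ι → ℝ≥0∞}
    (hW : IsWCover T a 𝒱 (M * N) Z n A c) :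
    wLocN (T^[M]) a (fun i => covJoinT T (𝒱 i) M) (birk T f M) (M * s) N Z ≤
      (Nat.card (∀ i, Fin (G i) → 𝒱 i) *
        ENNReal.ofReal (Real.exp (|s| * M + (a 0 + 1) * M * B / a 0))) *
        ∑' j, c j * pterm T f (a 0) s (n j) (A j) := by
  have : ∀ i, Finite (𝒱 i) := fun i => (h𝒱f i).to_subtype
  set C := ENNReal.ofReal (Real.exp (|s| * M + (a 0 + 1) * M * B / a 0))
  calc _ ≤ _ := wLocN_le_tsum (hW.tailRefine_iterate hT h𝒱m h𝒱c hM G hG)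
    _ ≤ ∑' p : ↥{p : ι × (∀ i, Fin (G i) → 𝒱 i) |
          (tailRefine T 𝒱 (fun i => ⌈cw a i * n p.1⌉₊) G (A p.1) p.2).Nonempty},
          c p.1.1 * (C * pterm T f (a 0) s (n p.1.1) (A p.1.1)) :=
      ENNReal.tsum_le_tsum fun p =>
        mul_le_mul_right (pterm_iterate_le_mul_pterm ha1 hB hB0 hM s _ inter_subset_left p.2) _
    _ ≤ ∑' p : ι × (∀ i, Fin (G i) → 𝒱 i), c p.1 * (C * pterm T f (a 0) s (n p.1) (A p.1)) :=
      ENNReal.tsum_comp_le_tsum_of_injective Subtype.val_injective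
        (fun p : ι × (∀ i, Fin (G i) → 𝒱 i) => c p.1 * (C * pterm T f (a 0) s (n p.1) (A p.1)))
    _ = _ := by
      rw [ENNReal.tsum_prod', ← ENNReal.tsum_mul_left]
      refine tsum_congr fun j => ?_
      dsimp only
      rw [ENNReal.tsum_const, ENat.card_eq_coe_natCard, ENat.toENNReal_coe]
      ring

lemma wLoc_iterate_eq_zero_iff [TopologicalSpace X] [OpensMeasurableSpace X] (hT : Measurable T)
    (h𝒱 : ∀ i, IsOpenCover (𝒱 i)) (ha1 : 0 < a 0) (hcw : ∀ i, 0 ≤ cw a i)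
    (hB : ∀ x, |f x| ≤ B) (hB0 : 0 ≤ B) (hM : 0 < M) (s : ℝ) :
    wLoc (T^[M]) a (fun i => covJoinT T (𝒱 i) M) (birk T f M) (M * s) Z = 0 ↔
      wLoc T a 𝒱 f s Z = 0 := by
  set C := ENNReal.ofReal (Real.exp (|s| * M + (a 0 + 1) * M * B / a 0))
  set G : Fin k → ℕ := fun i => M * (⌈cw a i⌉₊ + 1)
  simp only [wLoc, ENNReal.iSup_eq_zero]
  refine ⟨fun h N => ?_, fun h N => ?_⟩
  · refine eq_zero_of_forall_le_mul_of_wLocN_eq_zero (ENNReal.ofReal_ne_top : C ≠ ⊤)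
      (fun D hD hW => ?_) (h N)
    have := hD.to_subtype
    exact wLocN_le_mul_tsum_of_isWCover_iterate ha1 hB hB0 hM s hW
  · refine eq_zero_of_forall_le_mul_of_wLocN_eq_zero
      (ENNReal.mul_ne_top (ENNReal.natCast_ne_top (Nat.card (∀ i, Fin (G i) → 𝒱 i)))
        (ENNReal.ofReal_ne_top : C ≠ ⊤))
      (fun D hD hW => ?_) (h (M * N))
    have := hD.to_subtype
    exact wLocN_iterate_le_mul_tsum_of_isWCover hT (fun i => (h𝒱 i).1)
      (fun i V hV => ((h𝒱 i).2.1 V hV).measurableSet) (fun i => (h𝒱 i).2.2) ha1 hB hB0 hM G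
      (fun i => mul_ceil_div_add_one_le (hcw i) hM) s hW

end Iterate

theorem local_average_weighted_pressure_power_general
    {k : ℕ} [NeZero k]
    (X : Fin k → Type) [∀ i, MetricSpace (X i)] [∀ i, CompactSpace (X i)]
    [∀ i, MeasurableSpace (X i)] [∀ i, BorelSpace (X i)]
    (T : ∀ i, X i → X i) (hT : ∀ i, Continuous (T i))
    (τ : ∀ i, X 0 → X i)
    (hτc : ∀ i, Continuous (τ i))
    (hτe : ∀ i, τ i ∘ T 0 = T i ∘ τ i)
    (a : Fin k → ℝ) (ha1 : 0 < a 0) (ha : ∀ i, 0 ≤ a i)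
    (M : ℕ) (hM : 0 < M) (Z : Set (X 0)) (f : X 0 → ℝ) (hf : Continuous f)
    (𝒰 : ∀ i, Set (Set (X i))) (h𝒰 : ∀ i, IsOpenCover (𝒰 i)) :
    PWLoc (T 0) a (fun i => pullCov (τ i) (𝒰 i)) Z f
      = (((M : ℝ)⁻¹ : ℝ) : EReal) *
        PWLoc ((T 0)^[M]) a (fun i => pullCov (τ i) (covJoinT (T i) (𝒰 i) M)) Z
          (birk (T 0) f M) := by
  obtain ⟨B, hB⟩ := (isCompact_range hf.abs).bddAbove
  have hfB x : |f x| ≤ max B 0 := (hB ⟨x, rfl⟩).trans (le_max_left _ _)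
  have hcw i : 0 ≤ cw a i := Finset.sum_nonneg fun j _ => ha j
  have hM' : (0 : ℝ) < M := by exact_mod_cast hM
  have hiff s := wLoc_iterate_eq_zero_iff (Z := Z) (hT 0).measurable
    (fun i => (h𝒰 i).pullCov (hτc i)) ha1 hcw hfB (le_max_right _ _) hM s
  have hset : {s | wLoc ((T 0)^[M]) a (fun i => covJoinT (T 0) (pullCov (τ i) (𝒰 i)) M)
      (birk (T 0) f M) s Z = 0} =
      ((M : ℝ) * ·) '' {s | wLoc (T 0) a (fun i => pullCov (τ i) (𝒰 i)) f s Z = 0} := by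
    ext s
    refine ⟨fun h => ⟨s / M, (hiff _).1 ?_, mul_div_cancel₀ _ hM'.ne'⟩, ?_⟩
    · rwa [mul_div_cancel₀ _ hM'.ne']
    · rintro ⟨s, hs, rfl⟩
      exact (hiff s).2 hs
  rw [funext fun i => pullCov_covJoinT (fun x => congrFun (hτe i) x) (𝒰 i) M, PWLoc, PWLoc,
    hset, EReal.sInf_coe_image_mul hM', ← mul_assoc, ← EReal.coe_mul,
    inv_mul_cancel₀ hM'.ne', EReal.coe_one, one_mul]

/-- power rule for the local average 𝐚-weighted pressure:
`P_W^𝐚(T₁, Z, {𝒰_i}, f) = (1/M) · P_W^𝐚(T₁^M, Z, {(𝒰_i)_0^{M-1}}, S_M f)`. -/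
theorem local_average_weighted_pressure_power
    {k : ℕ} [NeZero k]
    (X : Fin k → Type) [∀ i, MetricSpace (X i)] [∀ i, CompactSpace (X i)]
    [∀ i, MeasurableSpace (X i)] [∀ i, BorelSpace (X i)]
    (T : ∀ i, X i → X i) (hT : ∀ i, Continuous (T i))
    (τ : ∀ i, X 0 → X i) (hτ0 : τ 0 = id)
    (hτc : ∀ i, Continuous (τ i)) (hτs : ∀ i, Function.Surjective (τ i))
    (hτe : ∀ i, τ i ∘ T 0 = T i ∘ τ i)
    (hchain : ∀ i j : Fin k, i ≤ j → ∃ p : X i → X j,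
        Continuous p ∧ p ∘ T i = T j ∘ p ∧ p ∘ τ i = τ j)
    (a : Fin k → ℝ) (ha1 : 0 < a 0) (ha : ∀ i, 0 ≤ a i)
    (M : ℕ) (hM : 0 < M) (Z : Set (X 0)) (f : X 0 → ℝ) (hf : Continuous f)
    (𝒰 : ∀ i, Set (Set (X i))) (h𝒰 : ∀ i, IsOpenCover (𝒰 i)) :
    PWLoc (T 0) a (fun i => pullCov (τ i) (𝒰 i)) Z f
      = (((M : ℝ)⁻¹ : ℝ) : EReal) *
        PWLoc ((T 0)^[M]) a (fun i => pullCov (τ i) (covJoinT (T i) (𝒰 i) M)) Z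
          (birk (T 0) f M) :=
  local_average_weighted_pressure_power_general X T hT τ hτc hτe a ha1 ha M hM Z f hf 𝒰 h𝒰

end WTP
end
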